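/- arXiv:1908.00131 — 6 statements merged into one kernel-verified Lean document; each statement's English description precedes it below -/
import Mathlib

section
/- If x* is a local minimizer of the problem min f(x) subject to c(x) = 0, then there exist a sequence of positive tolerances ε_k → 0, points x_k → x*, and multipliers λ_k ∈ ℝᵐ such that for every k: ‖∇f(x_k) + ∇c(x_k)λ_k‖ ≤ ε_k, ‖c(x_k)‖ ≤ ε_k, and dᵀ(∇²f(x_k) + Σ_{i=1}^m (λ_k)_i ∇²c_i(x_k))d ≥ −ε_k‖d‖² for every d ∈ ℝⁿ with ∇c(x_k)ᵀd = 0 (so in particular x_k is an ε_k-approximate second-order, hence first-order, KKT point). -/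
open Filter Topology

noncomputable def AL {n m : ℕ} (f : EuclideanSpace ℝ (Fin n) → ℝ)
    (c : EuclideanSpace ℝ (Fin n) → EuclideanSpace ℝ (Fin m)) (ρ : ℝ)
    (x : EuclideanSpace ℝ (Fin n)) (lam : EuclideanSpace ℝ (Fin m)) : ℝ :=
  f x + (inner ℝ lam (c x) : ℝ) + ρ / 2 * ‖c x‖ ^ 2

noncomputable def gradc {n m : ℕ}
    (c : EuclideanSpace ℝ (Fin n) → EuclideanSpace ℝ (Fin m))
    (x : EuclideanSpace ℝ (Fin n)) :
    EuclideanSpace ℝ (Fin m) →L[ℝ] EuclideanSpace ℝ (Fin n) :=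
  ContinuousLinearMap.adjoint (fderiv ℝ c x)

noncomputable def hess {n : ℕ} (g : EuclideanSpace ℝ (Fin n) → ℝ)
    (x d : EuclideanSpace ℝ (Fin n)) : ℝ :=
  iteratedFDeriv ℝ 2 g x ![d, d]

/-!
Penalty method. Minimize `f y + (ρ / 2) ‖c y‖² + ‖y - x*‖⁴` over a small closed ball around `x*`
with `ρ = k → ∞`. Compactness and the local minimality of `x*` force the minimizers `x_k` to
converge to `x*`, so they are eventually interior points and hence unconstrained local minimizers.
With `λ_k = ρ c(x_k)` their first-order condition reads
`∇f + ∇c λ_k = -4 ‖x_k - x*‖² (x_k - x*)`, and their second-order condition along `d ∈ ker c'(x_k)`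
reads `∇²f + Σ λ_i ∇²c_i ≥ -(4 ‖x_k - x*‖² ‖d‖² + 8 ⟪x_k - x*, d⟫²) ≥ -12 ‖x_k - x*‖² ‖d‖²`:
all the errors are `O(‖x_k - x*‖²)` or `‖c(x_k)‖`, which tend to `0`.
-/

open scoped RealInnerProductSpace

section LineDerivatives

variable {E F : Type*} [NormedAddCommGroup E] [NormedSpace ℝ E]
  [NormedAddCommGroup F] [NormedSpace ℝ F] {g : E → F}

theorem hasDerivAt_comp_add_smul (x d : E) {t : ℝ} (hg : DifferentiableAt ℝ g (x + t • d)) :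
    HasDerivAt (fun s : ℝ => g (x + s • d)) (fderiv ℝ g (x + t • d) d) t :=
  hg.hasFDerivAt.comp_hasDerivAt t <| by
    simpa using ((hasDerivAt_id t).smul_const d).const_add x

theorem hasDerivAt_fderiv_comp_add_smul (hg : ContDiff ℝ 2 g) (x d : E) :
    HasDerivAt (fun t : ℝ => fderiv ℝ g (x + t • d) d) (iteratedFDeriv ℝ 2 g x ![d, d]) 0 := by
  have hdg : Differentiable ℝ (fderiv ℝ g) :=
    (hg.fderiv_right (m := 1) (by norm_num)).differentiable one_ne_zero
  have h := (hasDerivAt_comp_add_smul x d (hdg _)).clm_apply (hasDerivAt_const 0 d)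
  simpa [iteratedFDeriv_two_apply] using h

theorem deriv_comp_add_smul (hg : Differentiable ℝ g) (x d : E) :
    deriv (fun s : ℝ => g (x + s • d)) = fun t => fderiv ℝ g (x + t • d) d :=
  funext fun _ => (hasDerivAt_comp_add_smul x d (hg _)).deriv

theorem iteratedFDeriv_two_eq_deriv_deriv (hg : ContDiff ℝ 2 g) (x d : E) :
    iteratedFDeriv ℝ 2 g x ![d, d] = deriv (deriv fun t : ℝ => g (x + t • d)) 0 := by
  rw [deriv_comp_add_smul (hg.differentiable two_ne_zero),
    (hasDerivAt_fderiv_comp_add_smul hg x d).deriv]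

end LineDerivatives

/-- If `f` had `f'' x₀ < 0`, the second derivative test would make `x₀` also a local maximum, so
`f` would be locally constant and `f'' x₀ = 0`. -/
theorem IsLocalMin.deriv_deriv_nonneg {f : ℝ → ℝ} {x₀ : ℝ} (hmin : IsLocalMin f x₀)
    (hc : ContinuousAt f x₀) : 0 ≤ deriv (deriv f) x₀ := by
  by_contra! hneg
  have hmax := isLocalMax_of_deriv_deriv_neg hneg hmin.deriv_eq_zero hc
  have hconst : f =ᶠ[𝓝 x₀] fun _ => f x₀ := by
    filter_upwards [hmin, hmax] with y hy₁ hy₂ using le_antisymm hy₂ hy₁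
  refine hneg.ne ?_
  rw [hconst.deriv.deriv_eq]
  simp

theorem IsLocalMin.iteratedFDeriv_two_nonneg {E : Type*} [NormedAddCommGroup E]
    [NormedSpace ℝ E] {g : E → ℝ} {x : E} (hg : ContDiff ℝ 2 g) (hmin : IsLocalMin g x) (d : E) :
    0 ≤ iteratedFDeriv ℝ 2 g x ![d, d] := by
  rw [iteratedFDeriv_two_eq_deriv_deriv hg x d]
  refine IsLocalMin.deriv_deriv_nonneg ?_ (hg.continuous.comp (by fun_prop)).continuousAt
  exact IsLocalMin.comp_continuous (g := fun t : ℝ => x + t • d) (by simpa using hmin) (by fun_prop)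

theorem iteratedFDeriv_two_sub_const_apply {E : Type*} [NormedAddCommGroup E] [NormedSpace ℝ E]
    (a x d : E) : iteratedFDeriv ℝ 2 (fun y => y - a) x ![d, d] = 0 := by
  have h : fderiv ℝ (fun y : E => y - a) = fun _ => ContinuousLinearMap.id ℝ E := by
    funext y
    rw [fderiv_sub_const, fderiv_fun_id]
  simp [iteratedFDeriv_two_apply, h]

section Inner

variable {E F : Type*} [NormedAddCommGroup E] [NormedSpace ℝ E]
  [NormedAddCommGroup F] [InnerProductSpace ℝ F] {u v : E → F} {x d : E}

theorem iteratedFDeriv_two_inner_apply (hu : ContDiff ℝ 2 u) (hv : ContDiff ℝ 2 v) :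
    iteratedFDeriv ℝ 2 (fun y => ⟪u y, v y⟫) x ![d, d] =
      ⟪u x, iteratedFDeriv ℝ 2 v x ![d, d]⟫ + 2 * ⟪fderiv ℝ u x d, fderiv ℝ v x d⟫ +
        ⟪iteratedFDeriv ℝ 2 u x ![d, d], v x⟫ := by
  have hu1 : Differentiable ℝ u := hu.differentiable two_ne_zero
  have hv1 : Differentiable ℝ v := hv.differentiable two_ne_zero
  have hline : (fun t : ℝ => fderiv ℝ (fun y => ⟪u y, v y⟫) (x + t • d) d) = fun t =>
      ⟪u (x + t • d), fderiv ℝ v (x + t • d) d⟫ + ⟪fderiv ℝ u (x + t • d) d, v (x + t • d)⟫ :=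
    funext fun _ => fderiv_inner_apply ℝ (hu1 _) (hv1 _) d
  have h := ((hasDerivAt_comp_add_smul x d (hu1 _)).inner ℝ
    (hasDerivAt_fderiv_comp_add_smul hv x d)).fun_add
    ((hasDerivAt_fderiv_comp_add_smul hu x d).inner ℝ (hasDerivAt_comp_add_smul x d (hv1 _)))
  rw [← hline] at h
  refine (hasDerivAt_fderiv_comp_add_smul (hu.inner ℝ hv) x d).unique (h.congr_deriv ?_)
  simp only [zero_smul, add_zero]
  ring

theorem fderiv_fun_norm_sq_apply (hu : DifferentiableAt ℝ u x) :
    fderiv ℝ (fun y => ‖u y‖ ^ 2) x d = 2 * ⟪u x, fderiv ℝ u x d⟫ := by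
  simp [hu.hasFDerivAt.norm_sq.fderiv]

theorem iteratedFDeriv_two_norm_sq_apply (hu : ContDiff ℝ 2 u) :
    iteratedFDeriv ℝ 2 (fun y => ‖u y‖ ^ 2) x ![d, d] =
      2 * ⟪u x, iteratedFDeriv ℝ 2 u x ![d, d]⟫ + 2 * ‖fderiv ℝ u x d‖ ^ 2 := by
  simp_rw [← real_inner_self_eq_norm_sq]
  rw [iteratedFDeriv_two_inner_apply hu hu, real_inner_comm (u x)]
  ring

end Inner

noncomputable def penalty {E F : Type*} [SeminormedAddCommGroup E] [SeminormedAddCommGroup F]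
    (f : E → ℝ) (c : E → F) (xstar : E) (ρ : ℝ) (y : E) : ℝ :=
  f y + ρ / 2 * ‖c y‖ ^ 2 + ‖y - xstar‖ ^ 4

theorem penalty_eq_add {E F : Type*} [SeminormedAddCommGroup E] [SeminormedAddCommGroup F]
    (f : E → ℝ) (c : E → F) (xstar : E) (ρ : ℝ) : penalty f c xstar ρ =
    f + (ρ / 2) • (fun y => ‖c y‖ ^ 2) + fun y => ‖‖y - xstar‖ ^ 2‖ ^ 2 := by
  funext y
  simp only [penalty, Pi.add_apply, Pi.smul_apply, smul_eq_mul, norm_pow, norm_norm]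
  ring

section Penalty

variable {E F : Type*} [NormedAddCommGroup E] [InnerProductSpace ℝ E]
  [NormedAddCommGroup F] [InnerProductSpace ℝ F] {f : E → ℝ} {c : E → F} {xstar : E} {ρ : ℝ}

theorem contDiff_penalty (hf : ContDiff ℝ 2 f) (hc : ContDiff ℝ 2 c) :
    ContDiff ℝ 2 (penalty f c xstar ρ) := by
  rw [penalty_eq_add]
  exact (hf.add ((hc.norm_sq ℝ).const_smul (ρ / 2 : ℝ))).add
    (((contDiff_id.sub contDiff_const).norm_sq ℝ).norm_sq ℝ)

theorem fderiv_penalty_apply (hf : Differentiable ℝ f) (hc : Differentiable ℝ c) (x v : E) :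
    fderiv ℝ (penalty f c xstar ρ) x v =
      fderiv ℝ f x v + ρ * ⟪c x, fderiv ℝ c x v⟫ + 4 * ‖x - xstar‖ ^ 2 * ⟪x - xstar, v⟫ := by
  have h := ((hf x).hasFDerivAt.add ((hc x).hasFDerivAt.norm_sq.const_smul (ρ / 2 : ℝ))).add
    ((hasFDerivAt_id x).sub_const xstar).norm_sq.norm_sq
  simp only [id_eq] at h
  rw [penalty_eq_add, h.fderiv]
  simp [inner_sub_left]
  ring

theorem iteratedFDeriv_two_penalty_apply (hf : ContDiff ℝ 2 f) (hc : ContDiff ℝ 2 c) (x d : E) :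
    iteratedFDeriv ℝ 2 (penalty f c xstar ρ) x ![d, d] =
      iteratedFDeriv ℝ 2 f x ![d, d] +
        ρ * (⟪c x, iteratedFDeriv ℝ 2 c x ![d, d]⟫ + ‖fderiv ℝ c x d‖ ^ 2) +
        4 * ‖x - xstar‖ ^ 2 * ‖d‖ ^ 2 + 8 * ⟪x - xstar, d⟫ ^ 2 := by
  have hc2 : ContDiff ℝ 2 fun y => ‖c y‖ ^ 2 := hc.norm_sq ℝ
  have hs : ContDiff ℝ 2 fun y : E => y - xstar := contDiff_id.sub contDiff_const
  have hq : ContDiff ℝ 2 fun y => ‖y - xstar‖ ^ 2 := hs.norm_sq ℝ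
  have hρc : ContDiff ℝ 2 ((ρ / 2) • fun y => ‖c y‖ ^ 2) := hc2.const_smul (ρ / 2)
  have hq2 : ContDiff ℝ 2 fun y => ‖‖y - xstar‖ ^ 2‖ ^ 2 := hq.norm_sq ℝ
  have hfρc : ContDiff ℝ 2 (f + (ρ / 2) • fun y => ‖c y‖ ^ 2) := hf.add hρc
  rw [penalty_eq_add, iteratedFDeriv_add_apply hfρc.contDiffAt hq2.contDiffAt,
    iteratedFDeriv_add_apply hf.contDiffAt hρc.contDiffAt,
    iteratedFDeriv_const_smul_apply hc2.contDiffAt]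
  simp only [add_apply, smul_apply, smul_eq_mul]
  rw [iteratedFDeriv_two_norm_sq_apply hc, iteratedFDeriv_two_norm_sq_apply hq,
    iteratedFDeriv_two_norm_sq_apply hs, iteratedFDeriv_two_sub_const_apply,
    fderiv_fun_norm_sq_apply (hs.differentiable two_ne_zero x), fderiv_sub_const, fderiv_fun_id]
  simp only [inner_zero_right, ContinuousLinearMap.id_apply, RCLike.inner_apply, conj_trivial,
    Real.norm_eq_abs, sq_abs]
  ring

end Penalty

section Euclidean

variable {n m : ℕ} {f : EuclideanSpace ℝ (Fin n) → ℝ}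
  {c : EuclideanSpace ℝ (Fin n) → EuclideanSpace ℝ (Fin m)}

theorem inner_iteratedFDeriv_two_eq_sum_hess (hc : ContDiff ℝ 2 c)
    (v : EuclideanSpace ℝ (Fin m)) (x d : EuclideanSpace ℝ (Fin n)) :
    ⟪v, iteratedFDeriv ℝ 2 c x ![d, d]⟫ = ∑ i, v i * hess (fun y => c y i) x d := by
  have hcomp (i : Fin m) : hess (fun y => c y i) x d = iteratedFDeriv ℝ 2 c x ![d, d] i :=
    congrArg (· ![d, d])
      ((EuclideanSpace.proj i).iteratedFDeriv_comp_left hc.contDiffAt le_rfl)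
  simp only [hcomp, PiLp.inner_apply, RCLike.inner_apply, conj_trivial, mul_comm]

theorem inner_gradient_add_gradc (x v : EuclideanSpace ℝ (Fin n))
    (w : EuclideanSpace ℝ (Fin m)) :
    ⟪gradient f x + gradc c x w, v⟫ = fderiv ℝ f x v + ⟪w, fderiv ℝ c x v⟫ := by
  rw [inner_add_left, gradient, InnerProductSpace.toDual_symm_apply, gradc,
    ContinuousLinearMap.adjoint_inner_left]

variable {xstar x : EuclideanSpace ℝ (Fin n)} {ρ : ℝ}

theorem norm_gradient_add_gradc_eq_of_isLocalMin_penalty (hf : Differentiable ℝ f)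
    (hc : Differentiable ℝ c) (hmin : IsLocalMin (penalty f c xstar ρ) x) :
    ‖gradient f x + gradc c x (ρ • c x)‖ = 4 * ‖x - xstar‖ ^ 3 := by
  have hstat : gradient f x + gradc c x (ρ • c x) = -((4 * ‖x - xstar‖ ^ 2) • (x - xstar)) := by
    refine ext_inner_right ℝ fun v => ?_
    have h : fderiv ℝ (penalty f c xstar ρ) x v = 0 := by rw [hmin.fderiv_eq_zero]; rfl
    rw [fderiv_penalty_apply hf hc] at h
    rw [inner_gradient_add_gradc, inner_neg_left, real_inner_smul_left, real_inner_smul_left]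
    linarith
  rw [hstat, norm_neg, norm_smul, Real.norm_of_nonneg (by positivity)]
  ring

theorem neg_mul_le_hess_add_sum_of_isLocalMin_penalty (hf : ContDiff ℝ 2 f) (hc : ContDiff ℝ 2 c)
    (hmin : IsLocalMin (penalty f c xstar ρ) x) {d : EuclideanSpace ℝ (Fin n)}
    (hd : fderiv ℝ c x d = 0) :
    -(12 * ‖x - xstar‖ ^ 2) * ‖d‖ ^ 2 ≤
      hess f x d + ∑ i, (ρ • c x) i * hess (fun y => c y i) x d := by
  have h := hmin.iteratedFDeriv_two_nonneg (contDiff_penalty hf hc) d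
  rw [iteratedFDeriv_two_penalty_apply hf hc, hd, norm_zero,
    inner_iteratedFDeriv_two_eq_sum_hess hc] at h
  have hcs : ⟪x - xstar, d⟫ ^ 2 ≤ ‖x - xstar‖ ^ 2 * ‖d‖ ^ 2 := by
    rw [← mul_pow]
    exact sq_le_sq' (neg_le_of_abs_le (abs_real_inner_le_norm _ _)) (real_inner_le_norm _ _)
  simp only [PiLp.smul_apply, smul_eq_mul, mul_assoc, ← Finset.mul_sum]
  rw [hess]
  nlinarith

end Euclidean

section PenaltyMethod

variable {E F : Type*} [NormedAddCommGroup E] [NormedAddCommGroup F] {f : E → ℝ} {c : E → F}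
  {xstar : E}

theorem penalty_self (hfeas : c xstar = 0) (ρ : ℝ) : penalty f c xstar ρ xstar = f xstar := by
  simp [penalty, hfeas]

theorem continuous_penalty (hf : Continuous f) (hc : Continuous c) (ρ : ℝ) :
    Continuous (penalty f c xstar ρ) := by
  unfold penalty
  fun_prop

theorem tendsto_of_penalty_le {K : Set E} (hK : IsCompact K) (hf : Continuous f)
    (hc : Continuous c) (hmin : ∀ y ∈ K, c y = 0 → f xstar ≤ f y) {ρ : ℕ → ℝ}
    (hρ : Tendsto ρ atTop atTop) {x : ℕ → E} (hxK : ∀ k, x k ∈ K)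
    (hle : ∀ k, penalty f c xstar (ρ k) (x k) ≤ f xstar) :
    Tendsto x atTop (𝓝 xstar) := by
  obtain ⟨B, hB⟩ := hK.bddBelow_image hf.continuousOn
  have hfB (k : ℕ) : B ≤ f (x k) := hB ⟨x k, hxK k, rfl⟩
  have hρpos : ∀ᶠ k in atTop, 0 < ρ k := hρ.eventually_gt_atTop 0
  have hprox : ∀ᶠ k in atTop, f (x k) + ‖x k - xstar‖ ^ 4 ≤ f xstar := by
    filter_upwards [hρpos] with k hk
    have := hle k
    unfold penalty at this
    nlinarith [sq_nonneg ‖c (x k)‖]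
  have hinfeas : Tendsto (fun k => ‖c (x k)‖ ^ 2) atTop (𝓝 0) := by
    refine squeeze_zero' (Eventually.of_forall fun k => by positivity) ?_
      ((tendsto_const_nhds (x := 2 * (f xstar - B))).div_atTop hρ)
    filter_upwards [hρpos] with k hk
    have := hle k
    unfold penalty at this
    rw [le_div_iff₀ hk]
    nlinarith [hfB k, sq_nonneg ‖x k - xstar‖, sq_nonneg (‖x k - xstar‖ ^ 2)]
  refine hK.tendsto_nhds_of_unique_mapClusterPt (Eventually.of_forall hxK) fun y hyK hy => ?_
  obtain ⟨ψ, hψ, hxψ⟩ := hy.tendsto_subseq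
  have hcy : c y = 0 := by
    have h := ((hc.tendsto y).comp hxψ).norm.pow 2
    rw [← norm_eq_zero, ← sq_eq_zero_iff (a := ‖c y‖)]
    exact tendsto_nhds_unique h (hinfeas.comp hψ.tendsto_atTop)
  have hproxy : f y + ‖y - xstar‖ ^ 4 ≤ f xstar :=
    le_of_tendsto (((hf.tendsto y).add ((tendsto_id.sub_const xstar).norm.pow 4)).comp hxψ)
      (hψ.tendsto_atTop.eventually hprox)
  have := hmin y hyK hcy
  have h4 : ‖y - xstar‖ ^ 4 = 0 := le_antisymm (by linarith) (by positivity)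
  simpa [sub_eq_zero] using h4

theorem exists_tendsto_isLocalMin_penalty [ProperSpace E] (hf : Continuous f) (hc : Continuous c)
    (hfeas : c xstar = 0) (hmin : IsLocalMinOn f {y | c y = 0} xstar) :
    ∃ (ρ : ℕ → ℝ) (x : ℕ → E),
      Tendsto x atTop (𝓝 xstar) ∧ ∀ k, IsLocalMin (penalty f c xstar (ρ k)) (x k) := by
  obtain ⟨r, hr, hball⟩ := Metric.mem_nhdsWithin_iff.1 hmin
  set K := Metric.closedBall xstar (r / 2)
  have hK : IsCompact K := isCompact_closedBall xstar (r / 2)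
  have hminK (y : E) (hy : y ∈ K) (hcy : c y = 0) : f xstar ≤ f y :=
    hball ⟨Metric.closedBall_subset_ball (by linarith) hy, hcy⟩
  have hxstarK : xstar ∈ K := Metric.mem_closedBall_self (by linarith)
  choose x hxK hxmin using fun k : ℕ =>
    hK.exists_isMinOn ⟨xstar, hxstarK⟩ (continuous_penalty hf hc (k : ℝ)).continuousOn
  have hle (k : ℕ) : penalty f c xstar k (x k) ≤ f xstar := by
    rw [← penalty_self (f := f) hfeas (k : ℝ)]
    exact hxmin k hxstarK
  have hx : Tendsto x atTop (𝓝 xstar) :=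
    tendsto_of_penalty_le hK hf hc hminK tendsto_natCast_atTop_atTop hxK hle
  obtain ⟨N, hN⟩ := eventually_atTop.1 (hx.eventually (Metric.ball_mem_nhds xstar (half_pos hr)))
  refine ⟨fun k => ((k + N : ℕ) : ℝ), fun k => x (k + N), hx.comp (tendsto_add_atTop_nat N),
    fun k => (hxmin (k + N)).isLocalMin ?_⟩
  exact mem_of_superset (Metric.isOpen_ball.mem_nhds (hN _ (Nat.le_add_left N k)))
    Metric.ball_subset_closedBall

end PenaltyMethod

theorem stmt0 {n m : ℕ}
    (f : EuclideanSpace ℝ (Fin n) → ℝ) (c : EuclideanSpace ℝ (Fin n) → EuclideanSpace ℝ (Fin m))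
    (hf : ContDiff ℝ 2 f) (hc : ContDiff ℝ 2 c)
    (xstar : EuclideanSpace ℝ (Fin n)) (hfeas : c xstar = 0)
    (hmin : IsLocalMinOn f {y : EuclideanSpace ℝ (Fin n) | c y = 0} xstar) :
    ∃ (ε : ℕ → ℝ) (x : ℕ → EuclideanSpace ℝ (Fin n)) (lam : ℕ → EuclideanSpace ℝ (Fin m)),
      (∀ k, 0 < ε k) ∧ Tendsto ε atTop (𝓝 0) ∧ Tendsto x atTop (𝓝 xstar) ∧
      ∀ k : ℕ,
        ‖gradient f (x k) + gradc c (x k) (lam k)‖ ≤ ε k ∧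
        ‖c (x k)‖ ≤ ε k ∧
        ∀ d : EuclideanSpace ℝ (Fin n), fderiv ℝ c (x k) d = 0 →
          -(ε k) * ‖d‖ ^ 2 ≤
            hess f (x k) d + ∑ i, lam k i * hess (fun y => c y i) (x k) d := by
  obtain ⟨ρ, x, hx, hloc⟩ :=
    exists_tendsto_isLocalMin_penalty hf.continuous hc.continuous hfeas hmin
  have hdist : Tendsto (fun k => ‖x k - xstar‖) atTop (𝓝 0) :=
    tendsto_iff_norm_sub_tendsto_zero.1 hx
  have hinfeas : Tendsto (fun k => ‖c (x k)‖) atTop (𝓝 0) := by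
    simpa [hfeas] using ((hc.continuous.tendsto xstar).comp hx).norm
  refine ⟨fun k => 4 * ‖x k - xstar‖ ^ 3 + 12 * ‖x k - xstar‖ ^ 2 + ‖c (x k)‖ + 1 / ((k : ℝ) + 1),
    x, fun k => ρ k • c (x k), fun k => by positivity, ?_, hx, fun k => ⟨?_, ?_, fun d hd => ?_⟩⟩
  · simpa using ((((hdist.pow 3).const_mul 4).add ((hdist.pow 2).const_mul 12)).add
      hinfeas).add tendsto_one_div_add_atTop_nhds_zero_nat
  · rw [norm_gradient_add_gradc_eq_of_isLocalMin_penalty (hf.differentiable two_ne_zero)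
      (hc.differentiable two_ne_zero) (hloc k)]
    have : 0 ≤ 12 * ‖x k - xstar‖ ^ 2 + ‖c (x k)‖ + 1 / ((k : ℝ) + 1) := by positivity
    linarith
  · have : 0 ≤ 4 * ‖x k - xstar‖ ^ 3 + 12 * ‖x k - xstar‖ ^ 2 + 1 / ((k : ℝ) + 1) := by positivity
    linarith
  · refine le_trans ?_ (neg_mul_le_hess_add_sum_of_isLocalMin_penalty hf hc (hloc k) hd)
    have : 0 ≤ 4 * ‖x k - xstar‖ ^ 3 + ‖c (x k)‖ + 1 / ((k : ℝ) + 1) := by positivity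
    nlinarith [sq_nonneg ‖d‖]
end

section
/- Fix k ≥ 1, β > 0, and a set S ⊆ ℝⁿ on which the smoothness/nondegeneracy assumption holds with constants M_f, L_f, M_c, σ > 0, L_c. Suppose x_{k−1}, x_k, x_{k+1} ∈ ℝⁿ with x_k, x_{k+1} ∈ S, multipliers λ_k, λ_{k+1} ∈ ℝᵐ, and residuals r̃_k, r̃_{k+1} ∈ ℝⁿ satisfy the stationarity equations ∇f(x_t) + ∇c(x_t)λ_t + β(x_t − x_{t−1}) = r̃_t for t = k and t = k+1. Then ‖λ_{k+1} − λ_k‖² ≤ C₁‖x_{k+1} − x_k‖² + C₂‖x_k − x_{k−1}‖² + (16M_c²/σ⁴)‖r̃_k‖² + (4/σ²)‖r̃_{k+1} − r̃_k‖², where C₁ = (4/σ²)(L_f + L_cM_f/σ + β)² and C₂ = (4/σ²)(β + 2M_cβ/σ)². -/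
open Filter Topology

/-!
Subtracting the two stationarity equations gives
`∇c(x₂)(λ₂ - λ₁) = (r₂ - r₁) - (∇f(x₂) - ∇f(x₁)) - β(x₂ - x₁) + β(x₁ - x₀) - (∇c(x₂) - ∇c(x₁))λ₁`,
so the lower bound `σ` on `∇c(x₂)` bounds `σ‖λ₂ - λ₁‖`. The last term is the only one not directly
controlled: `‖λ₁‖` is bounded through the first stationarity equation and the lower bound on
`∇c(x₁)`, and `‖∇c(x₂) - ∇c(x₁)‖` is estimated by `L_c‖x₂ - x₁‖` against the `M_f` part of that
bound and by `2M_c` against the rest. Squaring a sum of four terms costs a factor `4`.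
-/

lemma add_add_add_sq_le (a b c d : ℝ) :
    (a + b + c + d) ^ 2 ≤ 4 * (a ^ 2 + b ^ 2 + c ^ 2 + d ^ 2) := by
  nlinarith [sq_nonneg (a - b), sq_nonneg (a - c), sq_nonneg (a - d),
    sq_nonneg (b - c), sq_nonneg (b - d), sq_nonneg (c - d)]

lemma norm_gradc_sub_gradc {n m : ℕ}
    (c : EuclideanSpace ℝ (Fin n) → EuclideanSpace ℝ (Fin m)) (y z : EuclideanSpace ℝ (Fin n)) :
    ‖gradc c y - gradc c z‖ = ‖fderiv ℝ c y - fderiv ℝ c z‖ := by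
  rw [gradc, gradc, ← map_sub, LinearIsometryEquiv.norm_map]

lemma norm_gradc {n m : ℕ}
    (c : EuclideanSpace ℝ (Fin n) → EuclideanSpace ℝ (Fin m)) (y : EuclideanSpace ℝ (Fin n)) :
    ‖gradc c y‖ = ‖fderiv ℝ c y‖ :=
  LinearIsometryEquiv.norm_map _ _

section Stationarity

variable {E F : Type*} [NormedAddCommGroup E] [NormedSpace ℝ E]
  [NormedAddCommGroup F] [NormedSpace ℝ F]
  {A₁ A₂ : F →L[ℝ] E} {g₁ g₂ x₀ x₁ x₂ r₁ r₂ : E} {y₁ y₂ : F} {β σ : ℝ}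

lemma mul_norm_le_of_stationary (hσ : ∀ v, σ * ‖v‖ ≤ ‖A₁ v‖) (hβ : 0 ≤ β)
    (h₁ : g₁ + A₁ y₁ + β • (x₁ - x₀) = r₁) :
    σ * ‖y₁‖ ≤ ‖r₁‖ + ‖g₁‖ + β * ‖x₁ - x₀‖ := by
  have hA : A₁ y₁ = r₁ - g₁ - β • (x₁ - x₀) := by rw [← h₁]; abel
  calc σ * ‖y₁‖ ≤ ‖A₁ y₁‖ := hσ y₁
    _ ≤ ‖r₁ - g₁‖ + ‖β • (x₁ - x₀)‖ := hA ▸ norm_sub_le _ _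
    _ ≤ ‖r₁‖ + ‖g₁‖ + β * ‖x₁ - x₀‖ := by
      rw [norm_smul, Real.norm_of_nonneg hβ]
      linarith [norm_sub_le r₁ g₁]

lemma norm_apply_sub_apply_le_of_stationary (hβ : 0 ≤ β)
    (h₁ : g₁ + A₁ y₁ + β • (x₁ - x₀) = r₁) (h₂ : g₂ + A₂ y₂ + β • (x₂ - x₁) = r₂) :
    ‖A₂ y₂ - A₁ y₁‖ ≤ ‖r₂ - r₁‖ + ‖g₂ - g₁‖ + β * ‖x₂ - x₁‖ + β * ‖x₁ - x₀‖ := by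
  have hA : A₂ y₂ - A₁ y₁ = (r₂ - r₁) - (g₂ - g₁) - β • (x₂ - x₁) + β • (x₁ - x₀) := by
    rw [← h₁, ← h₂]; abel
  have hs : ∀ v : E, ‖β • v‖ = β * ‖v‖ := fun v => by rw [norm_smul, Real.norm_of_nonneg hβ]
  rw [hA]
  linarith [norm_add_le (r₂ - r₁ - (g₂ - g₁) - β • (x₂ - x₁)) (β • (x₁ - x₀)),
    norm_sub_le (r₂ - r₁ - (g₂ - g₁)) (β • (x₂ - x₁)), norm_sub_le (r₂ - r₁) (g₂ - g₁),
    hs (x₂ - x₁), hs (x₁ - x₀)]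

lemma mul_norm_sub_le (hσ : ∀ v, σ * ‖v‖ ≤ ‖A₂ v‖) (y₁ y₂ : F) :
    σ * ‖y₂ - y₁‖ ≤ ‖A₂ y₂ - A₁ y₁‖ + ‖A₂ - A₁‖ * ‖y₁‖ := by
  have hA : A₂ (y₂ - y₁) = (A₂ y₂ - A₁ y₁) - (A₂ - A₁) y₁ := by
    simp only [map_sub, sub_apply]; abel
  calc σ * ‖y₂ - y₁‖ ≤ ‖A₂ (y₂ - y₁)‖ := hσ _
    _ ≤ ‖A₂ y₂ - A₁ y₁‖ + ‖(A₂ - A₁) y₁‖ := hA ▸ norm_sub_le _ _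
    _ ≤ ‖A₂ y₂ - A₁ y₁‖ + ‖A₂ - A₁‖ * ‖y₁‖ := by gcongr; exact (A₂ - A₁).le_opNorm y₁

lemma norm_sub_le_of_stationary {Mf Lf Mc Lc : ℝ} (hσ : 0 < σ) (hβ : 0 ≤ β)
    (hσ₁ : ∀ v, σ * ‖v‖ ≤ ‖A₁ v‖) (hσ₂ : ∀ v, σ * ‖v‖ ≤ ‖A₂ v‖)
    (hA₁ : ‖A₁‖ ≤ Mc) (hA₂ : ‖A₂‖ ≤ Mc) (hA : ‖A₂ - A₁‖ ≤ Lc * ‖x₂ - x₁‖)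
    (hg₁ : ‖g₁‖ ≤ Mf) (hg : ‖g₂ - g₁‖ ≤ Lf * ‖x₂ - x₁‖)
    (h₁ : g₁ + A₁ y₁ + β • (x₁ - x₀) = r₁) (h₂ : g₂ + A₂ y₂ + β • (x₂ - x₁) = r₂) :
    ‖y₂ - y₁‖ ≤ (Lf + Lc * Mf / σ + β) / σ * ‖x₂ - x₁‖ + (β + 2 * Mc * β / σ) / σ * ‖x₁ - x₀‖
      + 2 * Mc / σ ^ 2 * ‖r₁‖ + ‖r₂ - r₁‖ / σ := by
  have hA' : ‖A₂ - A₁‖ ≤ 2 * Mc := by linarith [norm_sub_le A₂ A₁]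
  have hcross : σ * (‖A₂ - A₁‖ * ‖y₁‖)
      ≤ Lc * ‖x₂ - x₁‖ * Mf + 2 * Mc * (‖r₁‖ + β * ‖x₁ - x₀‖) :=
    calc σ * (‖A₂ - A₁‖ * ‖y₁‖) = ‖A₂ - A₁‖ * (σ * ‖y₁‖) := by ring
      _ ≤ ‖A₂ - A₁‖ * (‖r₁‖ + ‖g₁‖ + β * ‖x₁ - x₀‖) := by
        gcongr; exact mul_norm_le_of_stationary hσ₁ hβ h₁
      _ = ‖A₂ - A₁‖ * ‖g₁‖ + ‖A₂ - A₁‖ * (‖r₁‖ + β * ‖x₁ - x₀‖) := by ring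
      _ ≤ Lc * ‖x₂ - x₁‖ * Mf + 2 * Mc * (‖r₁‖ + β * ‖x₁ - x₀‖) := by
        gcongr; exact (norm_nonneg _).trans hA
  have hmain : σ * (σ * ‖y₂ - y₁‖) ≤ σ * (‖r₂ - r₁‖ + Lf * ‖x₂ - x₁‖ + β * ‖x₂ - x₁‖
      + β * ‖x₁ - x₀‖) + σ * (‖A₂ - A₁‖ * ‖y₁‖) := by
    rw [← mul_add]
    gcongr
    linarith [mul_norm_sub_le (A₁ := A₁) hσ₂ y₁ y₂,
      norm_apply_sub_apply_le_of_stationary hβ h₁ h₂]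
  rw [← mul_le_mul_iff_right₀ (pow_pos hσ 2)]
  have hrhs : σ ^ 2 * ((Lf + Lc * Mf / σ + β) / σ * ‖x₂ - x₁‖
      + (β + 2 * Mc * β / σ) / σ * ‖x₁ - x₀‖ + 2 * Mc / σ ^ 2 * ‖r₁‖ + ‖r₂ - r₁‖ / σ)
      = σ * (‖r₂ - r₁‖ + Lf * ‖x₂ - x₁‖ + β * ‖x₂ - x₁‖ + β * ‖x₁ - x₀‖)
        + (Lc * ‖x₂ - x₁‖ * Mf + 2 * Mc * (‖r₁‖ + β * ‖x₁ - x₀‖)) := by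
    field_simp
    ring
  rw [hrhs, sq, mul_assoc]
  linarith

end Stationarity

theorem stmt2_general {n m : ℕ}
    (f : EuclideanSpace ℝ (Fin n) → ℝ) (c : EuclideanSpace ℝ (Fin n) → EuclideanSpace ℝ (Fin m))
    (β Mf Lf Mc σ Lc : ℝ) (hβ : 0 < β) (hσ : 0 < σ)
    (S : Set (EuclideanSpace ℝ (Fin n)))
    (hMf : ∀ y ∈ S, ‖gradient f y‖ ≤ Mf)
    (hLf : ∀ y ∈ S, ∀ z ∈ S, ‖gradient f y - gradient f z‖ ≤ Lf * ‖y - z‖)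
    (hMc : ∀ y ∈ S, ‖fderiv ℝ c y‖ ≤ Mc)
    (hσlb : ∀ y ∈ S, ∀ v : EuclideanSpace ℝ (Fin m), σ * ‖v‖ ≤ ‖gradc c y v‖)
    (hLc : ∀ y ∈ S, ∀ z ∈ S, ‖fderiv ℝ c y - fderiv ℝ c z‖ ≤ Lc * ‖y - z‖)
    (xkm1 xk xkp1 : EuclideanSpace ℝ (Fin n)) (hxk : xk ∈ S) (hxkp1 : xkp1 ∈ S)
    (lamk lamkp1 : EuclideanSpace ℝ (Fin m)) (rk rkp1 : EuclideanSpace ℝ (Fin n))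
    (hstatk : gradient f xk + gradc c xk lamk + β • (xk - xkm1) = rk)
    (hstatkp1 : gradient f xkp1 + gradc c xkp1 lamkp1 + β • (xkp1 - xk) = rkp1) :
    ‖lamkp1 - lamk‖ ^ 2 ≤
      4 / σ ^ 2 * (Lf + Lc * Mf / σ + β) ^ 2 * ‖xkp1 - xk‖ ^ 2
      + 4 / σ ^ 2 * (β + 2 * Mc * β / σ) ^ 2 * ‖xk - xkm1‖ ^ 2
      + 16 * Mc ^ 2 / σ ^ 4 * ‖rk‖ ^ 2 + 4 / σ ^ 2 * ‖rkp1 - rk‖ ^ 2 := by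
  have hbound := norm_sub_le_of_stationary hσ hβ.le (hσlb xk hxk) (hσlb xkp1 hxkp1)
    ((norm_gradc c xk).trans_le (hMc xk hxk)) ((norm_gradc c xkp1).trans_le (hMc xkp1 hxkp1))
    ((norm_gradc_sub_gradc c xkp1 xk).trans_le (hLc xkp1 hxkp1 xk hxk))
    (hMf xk hxk) (hLf xkp1 hxkp1 xk hxk) hstatk hstatkp1
  calc ‖lamkp1 - lamk‖ ^ 2
      ≤ ((Lf + Lc * Mf / σ + β) / σ * ‖xkp1 - xk‖ + (β + 2 * Mc * β / σ) / σ * ‖xk - xkm1‖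
          + 2 * Mc / σ ^ 2 * ‖rk‖ + ‖rkp1 - rk‖ / σ) ^ 2 :=
        pow_le_pow_left₀ (norm_nonneg _) hbound 2
    _ ≤ 4 * (((Lf + Lc * Mf / σ + β) / σ * ‖xkp1 - xk‖) ^ 2
          + ((β + 2 * Mc * β / σ) / σ * ‖xk - xkm1‖) ^ 2
          + (2 * Mc / σ ^ 2 * ‖rk‖) ^ 2 + (‖rkp1 - rk‖ / σ) ^ 2) := add_add_add_sq_le _ _ _ _
    _ = _ := by ring

theorem stmt2 {n m : ℕ}
    (f : EuclideanSpace ℝ (Fin n) → ℝ) (c : EuclideanSpace ℝ (Fin n) → EuclideanSpace ℝ (Fin m))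
    (hf : ContDiff ℝ 2 f) (hc : ContDiff ℝ 2 c)
    (β Mf Lf Mc σ Lc : ℝ) (hβ : 0 < β) (hσ : 0 < σ)
    (S : Set (EuclideanSpace ℝ (Fin n)))
    (hMf : ∀ y ∈ S, ‖gradient f y‖ ≤ Mf)
    (hLf : ∀ y ∈ S, ∀ z ∈ S, ‖gradient f y - gradient f z‖ ≤ Lf * ‖y - z‖)
    (hMc : ∀ y ∈ S, ‖fderiv ℝ c y‖ ≤ Mc)
    (hσlb : ∀ y ∈ S, ∀ v : EuclideanSpace ℝ (Fin m), σ * ‖v‖ ≤ ‖gradc c y v‖)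
    (hLc : ∀ y ∈ S, ∀ z ∈ S, ‖fderiv ℝ c y - fderiv ℝ c z‖ ≤ Lc * ‖y - z‖)
    (xkm1 xk xkp1 : EuclideanSpace ℝ (Fin n)) (hxk : xk ∈ S) (hxkp1 : xkp1 ∈ S)
    (lamk lamkp1 : EuclideanSpace ℝ (Fin m)) (rk rkp1 : EuclideanSpace ℝ (Fin n))
    (hstatk : gradient f xk + gradc c xk lamk + β • (xk - xkm1) = rk)
    (hstatkp1 : gradient f xkp1 + gradc c xkp1 lamkp1 + β • (xkp1 - xk) = rkp1) :
    ‖lamkp1 - lamk‖ ^ 2 ≤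
      4 / σ ^ 2 * (Lf + Lc * Mf / σ + β) ^ 2 * ‖xkp1 - xk‖ ^ 2
      + 4 / σ ^ 2 * (β + 2 * Mc * β / σ) ^ 2 * ‖xk - xkm1‖ ^ 2
      + 16 * Mc ^ 2 / σ ^ 4 * ‖rk‖ ^ 2 + 4 / σ ^ 2 * ‖rkp1 - rk‖ ^ 2 :=
  stmt2_general f c β Mf Lf Mc σ Lc hβ hσ S hMf hLf hMc hσlb hLc xkm1 xk xkp1 hxk hxkp1 lamk lamkp1
    rk rkp1 hstatk hstatkp1
end

section
/- Let ρ > 0, β > 0 and suppose sequences (x_k) ⊆ ℝⁿ, (λ_k) ⊆ ℝᵐ satisfy, for every k ≥ 0, the decrease condition L_ρ(x_{k+1}, λ_k) + (β/2)‖x_{k+1} − x_k‖² ≤ L_ρ(x_k, λ_k) and the multiplier update λ_{k+1} = λ_k + ρ c(x_{k+1}). Define the Lyapunov function P_k = L_ρ(x_k, λ_k) + (β/4)‖x_k − x_{k−1}‖² for k ≥ 1. Then for every k ≥ 1: P_{k+1} − P_k ≤ (1/ρ)‖λ_{k+1} − λ_k‖² − (β/4)‖x_{k+1} − x_k‖²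 − (β/4)‖x_k − x_{k−1}‖². -/
open Filter Topology

/-!
The multiplier update λ⁺ = λ + ρ c(x⁺) raises `L_ρ(x⁺, ·)` by exactly `ρ‖c(x⁺)‖² = ‖λ⁺ - λ‖² / ρ`,
while the primal step lowers `L_ρ(·, λ)` by at least `(β/2)‖x⁺ - x‖²`; adding the two and
splitting `β/2 = β/4 + β/4` between the two proximal terms of `P` gives the bound.
-/

section AugmentedLagrangian

variable {n m : ℕ} (f : EuclideanSpace ℝ (Fin n) → ℝ)
  (c : EuclideanSpace ℝ (Fin n) → EuclideanSpace ℝ (Fin m)) (ρ : ℝ)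
  (x : EuclideanSpace ℝ (Fin n)) (lam : EuclideanSpace ℝ (Fin m))

theorem AL_add_multiplier (μ : EuclideanSpace ℝ (Fin m)) :
    AL f c ρ x (lam + μ) = AL f c ρ x lam + inner ℝ μ (c x) := by
  simp only [AL, inner_add_left]
  ring

theorem AL_dual_step :
    AL f c ρ x (lam + ρ • c x) = AL f c ρ x lam + 1 / ρ * ‖ρ • c x‖ ^ 2 := by
  rw [AL_add_multiplier, real_inner_smul_left, real_inner_self_eq_norm_sq, norm_smul,
    Real.norm_eq_abs, mul_pow, sq_abs, ← mul_assoc, one_div_mul_eq_div, sq ρ, mul_self_div_self]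

end AugmentedLagrangian

theorem stmt3_general {n m : ℕ}
    (f : EuclideanSpace ℝ (Fin n) → ℝ) (c : EuclideanSpace ℝ (Fin n) → EuclideanSpace ℝ (Fin m))
    (ρ β : ℝ)
    (x : ℕ → EuclideanSpace ℝ (Fin n)) (lam : ℕ → EuclideanSpace ℝ (Fin m))
    (hdecr : ∀ k : ℕ,
      AL f c ρ (x (k+1)) (lam k) + β / 2 * ‖x (k+1) - x k‖ ^ 2 ≤ AL f c ρ (x k) (lam k))
    (hmul : ∀ k : ℕ, lam (k+1) = lam k + ρ • c (x (k+1))) :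
    ∀ k : ℕ, 1 ≤ k →
      (AL f c ρ (x (k+1)) (lam (k+1)) + β / 4 * ‖x (k+1) - x k‖ ^ 2)
        - (AL f c ρ (x k) (lam k) + β / 4 * ‖x k - x (k-1)‖ ^ 2)
      ≤ 1 / ρ * ‖lam (k+1) - lam k‖ ^ 2 - β / 4 * ‖x (k+1) - x k‖ ^ 2
        - β / 4 * ‖x k - x (k-1)‖ ^ 2 := by
  intro k _
  have hstep := AL_dual_step f c ρ (x (k+1)) (lam k)
  rw [← hmul k] at hstep
  rw [sub_eq_of_eq_add' (hmul k)]
  linarith [hdecr k]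

theorem stmt3 {n m : ℕ}
    (f : EuclideanSpace ℝ (Fin n) → ℝ) (c : EuclideanSpace ℝ (Fin n) → EuclideanSpace ℝ (Fin m))
    (hf : ContDiff ℝ 2 f) (hc : ContDiff ℝ 2 c)
    (ρ β : ℝ) (hρ : 0 < ρ) (hβ : 0 < β)
    (x : ℕ → EuclideanSpace ℝ (Fin n)) (lam : ℕ → EuclideanSpace ℝ (Fin m))
    (hdecr : ∀ k : ℕ,
      AL f c ρ (x (k+1)) (lam k) + β / 2 * ‖x (k+1) - x k‖ ^ 2 ≤ AL f c ρ (x k) (lam k))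
    (hmul : ∀ k : ℕ, lam (k+1) = lam k + ρ • c (x (k+1))) :
    ∀ k : ℕ, 1 ≤ k →
      (AL f c ρ (x (k+1)) (lam (k+1)) + β / 4 * ‖x (k+1) - x k‖ ^ 2)
        - (AL f c ρ (x k) (lam k) + β / 4 * ‖x k - x (k-1)‖ ^ 2)
      ≤ 1 / ρ * ‖lam (k+1) - lam k‖ ^ 2 - β / 4 * ‖x (k+1) - x k‖ ^ 2
        - β / 4 * ‖x k - x (k-1)‖ ^ 2 :=
  stmt3_general f c ρ β x lam hdecr hmul
end

section
/- Under the hypotheses of the first-order complexity theorem for Proximal AL, and assuming additionally that ρ ≥ ‖λ₀‖²/2 + ρ₀, define for each k ≥ 0 the subproblem objective ψ_k(x) = L_ρ(x, λ_k) + (β/2)‖x − x_k‖². Then for every k ≥ 0: the sublevel set {x : ψ_k(x) ≤ ψ_k(x_k)} is contained in S⁰_α̂ (hence is compact), and ψ_k(x_k) − inf_{x ∈ ℝⁿ} ψ_k(x) ≤ α̂ − L̄. -/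
open Filter Topology

/-!
On the sublevel set of `ψ_k = AL(·, λ_k) + (β/2)‖· - x_k‖²` the penalty `(ρ - ρ₀)/2 ‖c‖²`
absorbs the linear term `⟨λ_k, c⟩`, so `f + (ρ₀/2)‖c‖²` is bounded there by
`AL(x_k, λ_k) + ‖λ_k‖² / (2(ρ - ρ₀))`; both claims follow once this quantity is at most `α̂`.
That is shown by induction, together with `x_k ∈ S = S⁰_α̂`. On `S` the lower bound `σ` on
`∇c` turns the stationarity conditions of two consecutive steps into a bound on
`ρ‖c(x_{k+2})‖²` by the last two proximal steps and residuals. Hence the potential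
`AL(x_{k+1}, λ_{k+1}) + (3β/8)‖x_{k+1} - x_k‖²` grows only by summable residual terms, while
`‖λ_{k+1}‖² / (2(ρ - ρ₀)) ≤ 1` because `∇c(x_{k+1}) λ_{k+1}` is bounded on `S`.
-/

local notation "ℝ^" n:max => EuclideanSpace ℝ (Fin n)

theorem mul_le_sq_div_add_mul_sq {a t d : ℝ} (hd : 0 < d) :
    a * t ≤ a ^ 2 / (2 * d) + d / 2 * t ^ 2 := by
  have : a ^ 2 / (2 * d) + d / 2 * t ^ 2 - a * t = (a - d * t) ^ 2 / (2 * d) := by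
    field_simp
    ring
  linarith [div_nonneg (sq_nonneg (a - d * t)) (by positivity : (0:ℝ) ≤ 2 * d)]

theorem add_add_sq_le (p q w : ℝ) : (p + q + w) ^ 2 ≤ 4 * p ^ 2 + 4 * q ^ 2 + 2 * w ^ 2 := by
  nlinarith [sq_nonneg (p + q - w), sq_nonneg (p - q)]

theorem add_mul_sq_le (a b : ℝ) {μ : ℝ} (hμ : 0 ≤ μ) :
    (a + μ * b) ^ 2 ≤ (1 + μ) * (a ^ 2 + μ * b ^ 2) := by
  nlinarith [mul_nonneg hμ (sq_nonneg (a - b))]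

theorem sum_range_mul_add_mul_le {a : ℕ → ℝ} {R w μ : ℝ} (ha : ∀ k, 0 ≤ a k)
    (hR : ∀ K, ∑ k ∈ Finset.range K, a k ≤ R) (hw : 0 ≤ w) (hμ : 0 ≤ μ) (K : ℕ) :
    ∑ k ∈ Finset.range K, w * (a (k+1) + μ * a k) ≤ w * (1 + μ) * R := by
  have hshift : ∑ k ∈ Finset.range K, a (k+1) ≤ R := by
    have := hR (K+1)
    rw [Finset.sum_range_succ'] at this
    linarith [ha 0]
  rw [← Finset.mul_sum, Finset.sum_add_distrib, ← Finset.mul_sum, mul_assoc]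
  gcongr
  linarith [mul_le_mul_of_nonneg_left (hR K) hμ]

theorem residual_weight_mul_le_one {σ Mc ρ R : ℝ} (hσ : 0 < σ) (hρ : 0 < ρ) (hR : 0 ≤ R)
    (hρR : 16 * (Mc ^ 2 + σ ^ 2) * R / σ ^ 4 ≤ ρ) :
    2 * (2 + 2 * Mc / σ) / (σ ^ 2 * ρ) * (1 + (1 + 2 * Mc / σ)) * R ≤ 1 := by
  rw [div_le_iff₀ (by positivity)] at hρR
  rw [← sub_nonneg]
  field_simp
  nlinarith [mul_nonneg hR (sq_nonneg (σ - Mc))]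

theorem bddBelow_range_of_isCompact_sublevel {X : Type*} [TopologicalSpace X] {g : X → ℝ}
    (hg : Continuous g) (hsub : ∀ α, IsCompact {y | g y ≤ α}) : BddBelow (Set.range g) := by
  rcases isEmpty_or_nonempty X with _ | ⟨⟨y₀⟩⟩
  · simp [Set.range_eq_empty]
  have hy₀ : y₀ ∈ {y | g y ≤ g y₀} := show g y₀ ≤ g y₀ from le_rfl
  obtain ⟨z, -, hz⟩ := (hsub (g y₀)).exists_isMinOn ⟨y₀, hy₀⟩ hg.continuousOn
  refine ⟨g z, Set.forall_mem_range.2 fun y => ?_⟩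
  by_cases hy : g y ≤ g y₀
  · exact hz hy
  · exact (hz hy₀).trans (le_of_not_ge hy)

section AugmentedLagrangian

variable {n m : ℕ} {f : ℝ^n → ℝ} {c : ℝ^n → ℝ^m}

theorem AL_add_smul_self (ρ : ℝ) (y : ℝ^n) (l : ℝ^m) :
    AL f c ρ y (l + ρ • c y) = AL f c ρ y l + ρ * ‖c y‖ ^ 2 := by
  simp only [AL, inner_add_left, real_inner_smul_left, real_inner_self_eq_norm_sq]
  ring

theorem AL_le {ρ : ℝ} (hρ : 0 < ρ) (y : ℝ^n) (l : ℝ^m) :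
    AL f c ρ y l ≤ f y + ‖l‖ ^ 2 / (2 * ρ) + ρ * ‖c y‖ ^ 2 := by
  have := mul_le_sq_div_add_mul_sq (a := ‖l‖) (t := ‖c y‖) hρ
  have := real_inner_le_norm l (c y)
  unfold AL
  linarith

theorem le_AL {ρ d : ℝ} (hd : 0 < d) (y : ℝ^n) (l : ℝ^m) :
    f y + (ρ - d) / 2 * ‖c y‖ ^ 2 - ‖l‖ ^ 2 / (2 * d) ≤ AL f c ρ y l := by
  have := mul_le_sq_div_add_mul_sq (a := ‖l‖) (t := ‖c y‖) hd
  have := neg_le_of_abs_le (abs_real_inner_le_norm l (c y))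
  unfold AL
  linarith

theorem sub_le_AL {ρ ρ₀ : ℝ} (hρ₀ : ρ₀ < ρ) (y : ℝ^n) (l : ℝ^m) :
    f y + ρ₀ / 2 * ‖c y‖ ^ 2 - ‖l‖ ^ 2 / (2 * (ρ - ρ₀)) ≤ AL f c ρ y l := by
  simpa only [sub_sub_cancel] using le_AL (f := f) (c := c) (ρ := ρ) (sub_pos.2 hρ₀) y l

theorem AL_add_norm_sq_div_le_seven_mul {ρ ρ₀ L : ℝ} (hρ₀ : ρ₀ < ρ)
    (hL : ∀ y, L ≤ f y + ρ₀ / 2 * ‖c y‖ ^ 2) (y : ℝ^n) (l : ℝ^m) :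
    AL f c ρ y l + ‖l‖ ^ 2 / (2 * (ρ - ρ₀)) ≤
      7 * AL f c ρ y l - 6 * L + 12 * (‖l‖ ^ 2 / (2 * (ρ - ρ₀))) := by
  have : 0 ≤ ‖l‖ ^ 2 / (2 * (ρ - ρ₀)) := div_nonneg (sq_nonneg _) (by linarith)
  linarith [sub_le_AL (f := f) (c := c) hρ₀ y l, hL y]

theorem proxAL_sublevel_subset {ρ ρ₀ β α : ℝ} (hρ₀ : ρ₀ < ρ) (hβ : 0 ≤ β) {z : ℝ^n} {l : ℝ^m}
    (hz : AL f c ρ z l + ‖l‖ ^ 2 / (2 * (ρ - ρ₀)) ≤ α) :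
    {y | AL f c ρ y l + β / 2 * ‖y - z‖ ^ 2 ≤ AL f c ρ z l} ⊆
      {y | f y + ρ₀ / 2 * ‖c y‖ ^ 2 ≤ α} := fun y hy => by
  have := sub_le_AL (f := f) (c := c) hρ₀ y l
  simp only [Set.mem_ofPred_eq] at hy ⊢
  linarith [mul_nonneg hβ (sq_nonneg ‖y - z‖)]

theorem AL_sub_iInf_proxAL_le {ρ ρ₀ β α L : ℝ} (hρ₀ : ρ₀ < ρ) (hβ : 0 ≤ β)
    (hL : ∀ y, L ≤ f y + ρ₀ / 2 * ‖c y‖ ^ 2) {z : ℝ^n} {l : ℝ^m}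
    (hz : AL f c ρ z l + ‖l‖ ^ 2 / (2 * (ρ - ρ₀)) ≤ α) :
    AL f c ρ z l - ⨅ y, (AL f c ρ y l + β / 2 * ‖y - z‖ ^ 2) ≤ α - L := by
  have : L - ‖l‖ ^ 2 / (2 * (ρ - ρ₀)) ≤ ⨅ y, (AL f c ρ y l + β / 2 * ‖y - z‖ ^ 2) :=
    le_ciInf fun y => by
      linarith [sub_le_AL (f := f) (c := c) hρ₀ y l, hL y, mul_nonneg hβ (sq_nonneg ‖y - z‖)]
  linarith

theorem seven_mul_AL_add_le {ρ ρ₀ U C₀ : ℝ} (hρ : 1 ≤ ρ) (hρ₀ρ : 3 * ρ₀ ≤ ρ)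
    (hU : ∀ y, ‖c y‖ ≤ 1 → f y ≤ U) {y : ℝ^n} (hcy : ‖c y‖ ^ 2 ≤ min (C₀ / ρ) 1) (l : ℝ^m) :
    7 * AL f c ρ y l + 12 * (‖l‖ ^ 2 / (2 * (ρ - ρ₀))) ≤ 7 * U + 7 * C₀ + 13 * ‖l‖ ^ 2 := by
  obtain ⟨hcC₀, hc₁⟩ := le_min_iff.1 hcy
  have hfy := hU y ((sq_le_one_iff₀ (norm_nonneg _)).1 hc₁)
  have hρc := (le_div_iff₀' (by linarith)).1 hcC₀
  have hAL := AL_le (f := f) (c := c) (ρ := ρ) (by linarith) y l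
  have h₁ : ‖l‖ ^ 2 / (2 * ρ) ≤ ‖l‖ ^ 2 / 2 :=
    div_le_div_of_nonneg_left (sq_nonneg _) two_pos (by linarith)
  have h₂ : ‖l‖ ^ 2 / (2 * (ρ - ρ₀)) ≤ ‖l‖ ^ 2 / (4 / 3) :=
    div_le_div_of_nonneg_left (sq_nonneg _) (by norm_num) (by linarith)
  linarith [sq_nonneg ‖l‖]

end AugmentedLagrangian

structure IsProxALIterates {n m : ℕ} (f : ℝ^n → ℝ) (c : ℝ^n → ℝ^m) (ρ β : ℝ)
    (x : ℕ → ℝ^n) (lam : ℕ → ℝ^m) (r : ℕ → ℝ^n) : Prop where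
  stationary : ∀ k, gradient f (x (k+1)) + gradc c (x (k+1)) (lam k)
    + ρ • gradc c (x (k+1)) (c (x (k+1))) + β • (x (k+1) - x k) = r (k+1)
  decrease : ∀ k,
    AL f c ρ (x (k+1)) (lam k) + β / 2 * ‖x (k+1) - x k‖ ^ 2 ≤ AL f c ρ (x k) (lam k)
  lam_succ : ∀ k, lam (k+1) = lam k + ρ • c (x (k+1))

structure SmoothNondegenerateOn {n m : ℕ} (f : ℝ^n → ℝ) (c : ℝ^n → ℝ^m) (S : Set (ℝ^n))
    (Mf Lf Mc σ Lc : ℝ) : Prop where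
  norm_gradient_le : ∀ y ∈ S, ‖gradient f y‖ ≤ Mf
  norm_gradient_sub_le : ∀ y ∈ S, ∀ z ∈ S, ‖gradient f y - gradient f z‖ ≤ Lf * ‖y - z‖
  norm_fderiv_le : ∀ y ∈ S, ‖fderiv ℝ c y‖ ≤ Mc
  le_norm_gradc : ∀ y ∈ S, ∀ v : ℝ^m, σ * ‖v‖ ≤ ‖gradc c y v‖
  norm_fderiv_sub_le : ∀ y ∈ S, ∀ z ∈ S, ‖fderiv ℝ c y - fderiv ℝ c z‖ ≤ Lc * ‖y - z‖

theorem norm_gradc_sub_gradc_le {n m : ℕ} (c : ℝ^n → ℝ^m) (y z : ℝ^n) (v : ℝ^m) :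
    ‖gradc c y v - gradc c z v‖ ≤ ‖fderiv ℝ c y - fderiv ℝ c z‖ * ‖v‖ := by
  rw [gradc, gradc, ← sub_apply, ← map_sub,
    ← (ContinuousLinearMap.adjoint).norm_map (fderiv ℝ c y - fderiv ℝ c z)]
  exact ContinuousLinearMap.le_opNorm _ _

namespace IsProxALIterates

variable {n m : ℕ} {f : ℝ^n → ℝ} {c : ℝ^n → ℝ^m} {ρ β : ℝ}
  {x : ℕ → ℝ^n} {lam : ℕ → ℝ^m} {r : ℕ → ℝ^n}

theorem AL_succ (h : IsProxALIterates f c ρ β x lam r) (k : ℕ) :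
    AL f c ρ (x (k+1)) (lam (k+1)) = AL f c ρ (x (k+1)) (lam k) + ρ * ‖c (x (k+1))‖ ^ 2 := by
  rw [h.lam_succ, AL_add_smul_self]

theorem gradc_lam_succ (h : IsProxALIterates f c ρ β x lam r) (k : ℕ) :
    gradc c (x (k+1)) (lam (k+1)) = r (k+1) - gradient f (x (k+1)) - β • (x (k+1) - x k) := by
  rw [h.lam_succ, map_add, map_smul, ← h.stationary k]
  abel

theorem mul_norm_lam_succ_le (h : IsProxALIterates f c ρ β x lam r) (hβ : 0 ≤ β)
    {S : Set (ℝ^n)} {Mf Lf Mc σ Lc : ℝ} (hS : SmoothNondegenerateOn f c S Mf Lf Mc σ Lc)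
    {k : ℕ} (hk : x (k+1) ∈ S) :
    σ * ‖lam (k+1)‖ ≤ Mf + (‖r (k+1)‖ + β * ‖x (k+1) - x k‖) := by
  calc σ * ‖lam (k+1)‖ ≤ ‖gradc c (x (k+1)) (lam (k+1))‖ := hS.le_norm_gradc _ hk _
    _ = ‖r (k+1) - gradient f (x (k+1)) - β • (x (k+1) - x k)‖ := by rw [h.gradc_lam_succ]
    _ ≤ ‖r (k+1)‖ + ‖gradient f (x (k+1))‖ + β * ‖x (k+1) - x k‖ := by
      refine (norm_sub_le _ _).trans (add_le_add (norm_sub_le _ _) ?_)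
      rw [norm_smul, Real.norm_of_nonneg hβ]
    _ ≤ Mf + (‖r (k+1)‖ + β * ‖x (k+1) - x k‖) := by linarith [hS.norm_gradient_le _ hk]

theorem mul_mul_norm_c_le_add_norm_fderiv_sub_mul (h : IsProxALIterates f c ρ β x lam r)
    (hρ : 0 < ρ) (hβ : 0 ≤ β) {S : Set (ℝ^n)} {Mf Lf Mc σ Lc : ℝ}
    (hS : SmoothNondegenerateOn f c S Mf Lf Mc σ Lc) {k : ℕ} (h₁ : x (k+1) ∈ S)
    (h₂ : x (k+2) ∈ S) :
    σ * (ρ * ‖c (x (k+2))‖) ≤ ‖r (k+2)‖ + ‖r (k+1)‖ + Lf * ‖x (k+2) - x (k+1)‖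
      + (β * ‖x (k+2) - x (k+1)‖ + β * ‖x (k+1) - x k‖)
      + ‖fderiv ℝ c (x (k+2)) - fderiv ℝ c (x (k+1))‖ * ‖lam (k+1)‖ := by
  have hlow : σ * (ρ * ‖c (x (k+2))‖) ≤
      ‖gradc c (x (k+2)) (lam (k+2)) - gradc c (x (k+2)) (lam (k+1))‖ := by
    have := hS.le_norm_gradc _ h₂ (ρ • c (x (k+2)))
    rw [norm_smul, Real.norm_of_nonneg hρ.le] at this
    rwa [h.lam_succ (k+1), map_add, add_sub_cancel_left]
  have hdiff : gradc c (x (k+2)) (lam (k+2)) - gradc c (x (k+2)) (lam (k+1)) =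
      (r (k+2) - r (k+1)) - (gradient f (x (k+2)) - gradient f (x (k+1)))
        - (β • (x (k+2) - x (k+1)) - β • (x (k+1) - x k))
        - (gradc c (x (k+2)) (lam (k+1)) - gradc c (x (k+1)) (lam (k+1))) := by
    rw [h.gradc_lam_succ (k+1), h.gradc_lam_succ k]
    abel
  refine hlow.trans ?_
  rw [hdiff]
  refine (norm_sub_le _ _).trans (add_le_add ((norm_sub_le _ _).trans (add_le_add
    ((norm_sub_le _ _).trans (add_le_add (norm_sub_le _ _)
      (hS.norm_gradient_sub_le _ h₂ _ h₁))) ?_)) (norm_gradc_sub_gradc_le c _ _ _))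
  refine (norm_sub_le _ _).trans_eq ?_
  rw [norm_smul, norm_smul, Real.norm_of_nonneg hβ]

theorem mul_mul_norm_c_le (h : IsProxALIterates f c ρ β x lam r) (hρ : 0 < ρ) (hβ : 0 ≤ β)
    {S : Set (ℝ^n)} {Mf Lf Mc σ Lc : ℝ} (hS : SmoothNondegenerateOn f c S Mf Lf Mc σ Lc)
    (hσ : 0 < σ) {k : ℕ} (h₁ : x (k+1) ∈ S) (h₂ : x (k+2) ∈ S) :
    σ * (ρ * ‖c (x (k+2))‖) ≤ (Lf + Lc * Mf / σ + β) * ‖x (k+2) - x (k+1)‖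
      + (β + 2 * Mc * β / σ) * ‖x (k+1) - x k‖ + (‖r (k+2)‖ + (1 + 2 * Mc / σ) * ‖r (k+1)‖) := by
  set P := fderiv ℝ c (x (k+2)) - fderiv ℝ c (x (k+1))
  set e := ‖r (k+1)‖ + β * ‖x (k+1) - x k‖
  have hP_lip : ‖P‖ ≤ Lc * ‖x (k+2) - x (k+1)‖ := hS.norm_fderiv_sub_le _ h₂ _ h₁
  have hP_bdd : ‖P‖ ≤ 2 * Mc := by
    linarith [norm_sub_le (fderiv ℝ c (x (k+2))) (fderiv ℝ c (x (k+1))),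
      hS.norm_fderiv_le _ h₁, hS.norm_fderiv_le _ h₂]
  have hMf : 0 ≤ Mf := (norm_nonneg _).trans (hS.norm_gradient_le _ h₁)
  have hPlam : ‖P‖ * ‖lam (k+1)‖ ≤ (Lc * ‖x (k+2) - x (k+1)‖ * Mf + 2 * Mc * e) / σ := by
    have he : 0 ≤ e := by positivity
    rw [le_div_iff₀ hσ]
    calc ‖P‖ * ‖lam (k+1)‖ * σ = ‖P‖ * (σ * ‖lam (k+1)‖) := by ring
      _ ≤ ‖P‖ * (Mf + e) :=
        mul_le_mul_of_nonneg_left (h.mul_norm_lam_succ_le hβ hS h₁) (norm_nonneg _)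
      _ ≤ Lc * ‖x (k+2) - x (k+1)‖ * Mf + 2 * Mc * e := by
        rw [mul_add]
        gcongr
  have hrhs : (Lf + Lc * Mf / σ + β) * ‖x (k+2) - x (k+1)‖
      + (β + 2 * Mc * β / σ) * ‖x (k+1) - x k‖ + (‖r (k+2)‖ + (1 + 2 * Mc / σ) * ‖r (k+1)‖) =
      ‖r (k+2)‖ + ‖r (k+1)‖ + Lf * ‖x (k+2) - x (k+1)‖
        + (β * ‖x (k+2) - x (k+1)‖ + β * ‖x (k+1) - x k‖)
        + (Lc * ‖x (k+2) - x (k+1)‖ * Mf + 2 * Mc * e) / σ := by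
    field_simp
    ring
  linarith [h.mul_mul_norm_c_le_add_norm_fderiv_sub_mul hρ hβ hS h₁ h₂]

theorem mul_norm_c_sq_le (h : IsProxALIterates f c ρ β x lam r) (hρ : 0 < ρ) (hβ : 0 ≤ β)
    {S : Set (ℝ^n)} {Mf Lf Mc σ Lc : ℝ} (hS : SmoothNondegenerateOn f c S Mf Lf Mc σ Lc)
    (hσ : 0 < σ) (hC₁ : 4 / σ ^ 2 * (Lf + Lc * Mf / σ + β) ^ 2 ≤ ρ * β / 8)
    (hC₂ : 4 / σ ^ 2 * (β + 2 * Mc * β / σ) ^ 2 ≤ ρ * β / 8)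
    {k : ℕ} (h₁ : x (k+1) ∈ S) (h₂ : x (k+2) ∈ S) :
    ρ * ‖c (x (k+2))‖ ^ 2 ≤ β / 8 * ‖x (k+2) - x (k+1)‖ ^ 2 + β / 8 * ‖x (k+1) - x k‖ ^ 2
      + 2 * (2 + 2 * Mc / σ) / (σ ^ 2 * ρ)
        * (‖r (k+2)‖ ^ 2 + (1 + 2 * Mc / σ) * ‖r (k+1)‖ ^ 2) := by
  set A := Lf + Lc * Mf / σ + β
  set B := β + 2 * Mc * β / σ
  set μ := 1 + 2 * Mc / σ
  have hμ : 0 ≤ μ := by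
    have := (norm_nonneg _).trans (hS.norm_fderiv_le _ h₁)
    positivity
  rw [div_mul_eq_mul_div, div_le_iff₀ (by positivity)] at hC₁ hC₂
  have hσρ : 0 < σ ^ 2 * ρ := by positivity
  rw [show 2 + 2 * Mc / σ = 1 + μ by ring]
  refine le_of_mul_le_mul_left ?_ hσρ
  calc σ ^ 2 * ρ * (ρ * ‖c (x (k+2))‖ ^ 2) = (σ * (ρ * ‖c (x (k+2))‖)) ^ 2 := by ring
    _ ≤ (A * ‖x (k+2) - x (k+1)‖ + B * ‖x (k+1) - x k‖ + (‖r (k+2)‖ + μ * ‖r (k+1)‖)) ^ 2 :=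
      pow_le_pow_left₀ (by positivity) (h.mul_mul_norm_c_le hρ hβ hS hσ h₁ h₂) 2
    _ ≤ 4 * A ^ 2 * ‖x (k+2) - x (k+1)‖ ^ 2 + 4 * B ^ 2 * ‖x (k+1) - x k‖ ^ 2
        + 2 * ((1 + μ) * (‖r (k+2)‖ ^ 2 + μ * ‖r (k+1)‖ ^ 2)) := by
      have := add_add_sq_le (A * ‖x (k+2) - x (k+1)‖) (B * ‖x (k+1) - x k‖)
        (‖r (k+2)‖ + μ * ‖r (k+1)‖)
      have := add_mul_sq_le ‖r (k+2)‖ ‖r (k+1)‖ hμ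
      rw [mul_pow, mul_pow] at *
      linarith
    _ ≤ ρ * β / 8 * σ ^ 2 * ‖x (k+2) - x (k+1)‖ ^ 2 + ρ * β / 8 * σ ^ 2 * ‖x (k+1) - x k‖ ^ 2
        + 2 * ((1 + μ) * (‖r (k+2)‖ ^ 2 + μ * ‖r (k+1)‖ ^ 2)) := by gcongr
    _ = σ ^ 2 * ρ * (β / 8 * ‖x (k+2) - x (k+1)‖ ^ 2 + β / 8 * ‖x (k+1) - x k‖ ^ 2
        + 2 * (1 + μ) / (σ ^ 2 * ρ) * (‖r (k+2)‖ ^ 2 + μ * ‖r (k+1)‖ ^ 2)) := by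
      field_simp

theorem norm_lam_succ_sq_div_le_one (h : IsProxALIterates f c ρ β x lam r) (hβ : 0 ≤ β)
    {S : Set (ℝ^n)} {Mf Lf Mc σ Lc : ℝ} (hS : SmoothNondegenerateOn f c S Mf Lf Mc σ Lc)
    (hσ : 0 < σ) (hSb : Bornology.IsBounded S) {ρ₀ : ℝ}
    (hρN : (Mf + β * Metric.diam S + 1) ^ 2 / (2 * σ ^ 2) + ρ₀ ≤ ρ)
    {k : ℕ} (hr : ‖r (k+1)‖ ≤ 1) (h₀ : x k ∈ S) (h₁ : x (k+1) ∈ S) :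
    ‖lam (k+1)‖ ^ 2 / (2 * (ρ - ρ₀)) ≤ 1 := by
  have hstep : β * ‖x (k+1) - x k‖ ≤ β * Metric.diam S := by
    rw [← dist_eq_norm]
    exact mul_le_mul_of_nonneg_left (Metric.dist_le_diam_of_mem hSb h₁ h₀) hβ
  have hlam : σ * ‖lam (k+1)‖ ≤ Mf + β * Metric.diam S + 1 := by
    linarith [h.mul_norm_lam_succ_le hβ hS h₁]
  have hsq := pow_le_pow_left₀ (by positivity) hlam 2
  rw [div_add' _ _ _ (by positivity), div_le_iff₀ (by positivity)] at hρN
  have hσ2 : σ ^ 2 * ‖lam (k+1)‖ ^ 2 ≤ σ ^ 2 * (2 * (ρ - ρ₀)) := by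
    rw [mul_pow] at hsq
    linarith
  have hlam2 := le_of_mul_le_mul_left hσ2 (by positivity)
  exact div_le_one_of_le₀ hlam2 ((sq_nonneg _).trans hlam2)

theorem AL_one_add_le (h : IsProxALIterates f c ρ β x lam r) (hρ : 0 < ρ) (hβ : 0 ≤ β)
    {ρ₀ L : ℝ} (hρ₀ρ : 3 * ρ₀ ≤ ρ) (hL : ∀ y, L ≤ f y + ρ₀ / 2 * ‖c y‖ ^ 2) :
    AL f c ρ (x 1) (lam 1) + β / 2 * ‖x 1 - x 0‖ ^ 2 ≤
      7 * AL f c ρ (x 0) (lam 0) - 6 * L + 12 * (‖lam 0‖ ^ 2 / (2 * (ρ - ρ₀))) := by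
  have hd : 0 < (ρ - ρ₀) / 2 := by linarith
  have hlow := le_AL (f := f) (c := c) (ρ := ρ) hd (x 1) (lam 0)
  have hdual : ‖lam 0‖ ^ 2 / (2 * ((ρ - ρ₀) / 2)) = 2 * (‖lam 0‖ ^ 2 / (2 * (ρ - ρ₀))) := by
    field_simp
  have hc₁ : (ρ - ρ₀) / 4 * ‖c (x 1)‖ ^ 2 ≤
      AL f c ρ (x 0) (lam 0) - L + 2 * (‖lam 0‖ ^ 2 / (2 * (ρ - ρ₀))) := by
    linarith [h.decrease 0, hL (x 1), mul_nonneg hβ (sq_nonneg ‖x 1 - x 0‖)]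
  rw [h.AL_succ 0]
  nlinarith [h.decrease 0, mul_nonneg (sub_nonneg.2 hρ₀ρ) (sq_nonneg ‖c (x 1)‖)]

theorem AL_add_norm_sq_div_le (h : IsProxALIterates f c ρ β x lam r) (hρ : 0 < ρ)
    (hβ : 0 ≤ β) {ρ₀ L α : ℝ} (hρ₀ρ : 3 * ρ₀ ≤ ρ)
    (hL : ∀ y, L ≤ f y + ρ₀ / 2 * ‖c y‖ ^ 2)
    (hα : 7 * AL f c ρ (x 0) (lam 0) - 6 * L + 12 * (‖lam 0‖ ^ 2 / (2 * (ρ - ρ₀))) + 2 ≤ α)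
    {S : Set (ℝ^n)} (hS : {y | f y + ρ₀ / 2 * ‖c y‖ ^ 2 ≤ α} ⊆ S)
    (hlam : ∀ k, x k ∈ S → x (k+1) ∈ S → ‖lam (k+1)‖ ^ 2 / (2 * (ρ - ρ₀)) ≤ 1)
    {e : ℕ → ℝ} (hc : ∀ k, x (k+1) ∈ S → x (k+2) ∈ S →
      ρ * ‖c (x (k+2))‖ ^ 2 ≤ β / 8 * ‖x (k+2) - x (k+1)‖ ^ 2 + β / 8 * ‖x (k+1) - x k‖ ^ 2 + e k)
    (he : ∀ K, ∑ j ∈ Finset.range K, e j ≤ 1) (k : ℕ) :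
    AL f c ρ (x k) (lam k) + ‖lam k‖ ^ 2 / (2 * (ρ - ρ₀)) ≤ α := by
  have hρ₀' : ρ₀ < ρ := by linarith
  set E := 7 * AL f c ρ (x 0) (lam 0) - 6 * L + 12 * (‖lam 0‖ ^ 2 / (2 * (ρ - ρ₀)))
  have mem : ∀ k, AL f c ρ (x k) (lam k) + ‖lam k‖ ^ 2 / (2 * (ρ - ρ₀)) ≤ α →
      x k ∈ S ∧ x (k+1) ∈ S := fun k hk =>
    ⟨hS (proxAL_sublevel_subset hρ₀' hβ hk (by simp)),
      hS (proxAL_sublevel_subset hρ₀' hβ hk (h.decrease k))⟩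
  have key : ∀ K, AL f c ρ (x K) (lam K) + ‖lam K‖ ^ 2 / (2 * (ρ - ρ₀)) ≤ α ∧
      AL f c ρ (x (K+1)) (lam (K+1)) + 3 * β / 8 * ‖x (K+1) - x K‖ ^ 2
        ≤ E + ∑ j ∈ Finset.range K, e j := by
    intro K
    induction K with
    | zero =>
      refine ⟨(AL_add_norm_sq_div_le_seven_mul hρ₀' hL (x 0) (lam 0)).trans (by linarith), ?_⟩
      rw [Finset.sum_range_zero, add_zero]
      linarith [h.AL_one_add_le hρ hβ hρ₀ρ hL, mul_nonneg hβ (sq_nonneg ‖x 1 - x 0‖)]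
    | succ K ih =>
      obtain ⟨hK, hΦ⟩ := ih
      obtain ⟨h₀, h₁⟩ := mem K hK
      have hK₁ : AL f c ρ (x (K+1)) (lam (K+1)) + ‖lam (K+1)‖ ^ 2 / (2 * (ρ - ρ₀)) ≤ α := by
        linarith [hlam K h₀ h₁, he K, mul_nonneg hβ (sq_nonneg ‖x (K+1) - x K‖)]
      refine ⟨hK₁, ?_⟩
      rw [Finset.sum_range_succ, h.AL_succ]
      linarith [h.decrease (K+1), hc K h₁ (mem (K+1) hK₁).2,
        mul_nonneg hβ (sq_nonneg ‖x (K+1) - x K‖)]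
  exact (key k).1

end IsProxALIterates

theorem stmt9_general
    {n m : ℕ}
    (f : EuclideanSpace ℝ (Fin n) → ℝ) (c : EuclideanSpace ℝ (Fin n) → EuclideanSpace ℝ (Fin m))
    (hf : ContDiff ℝ 2 f) (hc : ContDiff ℝ 2 c)
    (ρ β : ℝ) (hρ : 0 < ρ) (hβ : 0 < β)
    (x : ℕ → EuclideanSpace ℝ (Fin n)) (lam : ℕ → EuclideanSpace ℝ (Fin m)) (r : ℕ → EuclideanSpace ℝ (Fin n))
    (hstat : ∀ k : ℕ,
      gradient f (x (k+1)) + gradc c (x (k+1)) (lam k)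
        + ρ • gradc c (x (k+1)) (c (x (k+1))) + β • (x (k+1) - x k) = r (k+1))
    (hdecr : ∀ k : ℕ,
      AL f c ρ (x (k+1)) (lam k) + β / 2 * ‖x (k+1) - x k‖ ^ 2 ≤ AL f c ρ (x k) (lam k))
    (hmul : ∀ k : ℕ, lam (k+1) = lam k + ρ • c (x (k+1)))
    (ρ₀ Lbar U C₀ αhat : ℝ)
    (hcompact : ∀ α : ℝ,
      {y : EuclideanSpace ℝ (Fin n) | f y + ρ₀ / 2 * ‖c y‖ ^ 2 ≤ α} = ∅ ∨
        IsCompact {y : EuclideanSpace ℝ (Fin n) | f y + ρ₀ / 2 * ‖c y‖ ^ 2 ≤ α})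
    (hLbar : Lbar = ⨅ y : EuclideanSpace ℝ (Fin n), (f y + ρ₀ / 2 * ‖c y‖ ^ 2))
    (hU : ∀ y : EuclideanSpace ℝ (Fin n), ‖c y‖ ≤ 1 → f y ≤ U)
    (hαhat : αhat = 7 * U + 7 * C₀ - 6 * Lbar + 13 * ‖lam 0‖ ^ 2 + 2)
    (S : Set (EuclideanSpace ℝ (Fin n)))
    (hS : S = {y : EuclideanSpace ℝ (Fin n) | f y + ρ₀ / 2 * ‖c y‖ ^ 2 ≤ αhat})
    (Mf Lf Mc σ Lc DS : ℝ) (hσ : 0 < σ)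
    (hMf : ∀ y ∈ S, ‖gradient f y‖ ≤ Mf)
    (hLf : ∀ y ∈ S, ∀ z ∈ S, ‖gradient f y - gradient f z‖ ≤ Lf * ‖y - z‖)
    (hMc : ∀ y ∈ S, ‖fderiv ℝ c y‖ ≤ Mc)
    (hσlb : ∀ y ∈ S, ∀ v : EuclideanSpace ℝ (Fin m), σ * ‖v‖ ≤ ‖gradc c y v‖)
    (hLc : ∀ y ∈ S, ∀ z ∈ S, ‖fderiv ℝ c y - fderiv ℝ c z‖ ≤ Lc * ‖y - z‖)
    (hDS : DS = Metric.diam S)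
    (C1 C2 : ℝ)
    (hC1 : C1 = 4 / σ ^ 2 * (Lf + Lc * Mf / σ + β) ^ 2)
    (hC2 : C2 = 4 / σ ^ 2 * (β + 2 * Mc * β / σ) ^ 2)
    (ε η : ℝ) (hε : 0 < ε ∧ ε ≤ 1)
    (R : ℝ) (hR : 1 ≤ R)
    (hRsum : ∀ K : ℕ, ∑ k ∈ Finset.range K, ‖r (k+1)‖ ^ 2 ≤ R)
    (hrb : ∀ k : ℕ, 1 ≤ k → ‖r k‖ ≤ ε / 2)
    (hβdef : β = ε ^ η / 2)
    (hρbig : max (max (16 * max C1 C2 / ε ^ η)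
        ((Mf + β * DS + 1) ^ 2 / (2 * σ ^ 2) + ρ₀))
        (max (max (16 * (Mc ^ 2 + σ ^ 2) * R / σ ^ 4) (3 * ρ₀)) 1) ≤ ρ)
    (hx0 : ‖c (x 0)‖ ^ 2 ≤ min (C₀ / ρ) 1) :
    ∀ k : ℕ,
      {y : EuclideanSpace ℝ (Fin n) | AL f c ρ y (lam k) + β / 2 * ‖y - x k‖ ^ 2 ≤ AL f c ρ (x k) (lam k)} ⊆ S ∧
      AL f c ρ (x k) (lam k)
        - (⨅ y : EuclideanSpace ℝ (Fin n), (AL f c ρ y (lam k) + β / 2 * ‖y - x k‖ ^ 2)) ≤ αhat - Lbar := by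
  simp only [max_le_iff] at hρbig
  obtain ⟨⟨hρC, hρN⟩, ⟨hρR, hρ₀ρ⟩, hρ1⟩ := hρbig
  have hρ₀ : ρ₀ < ρ := by linarith only [hρ, hρ₀ρ]
  have hit : IsProxALIterates f c ρ β x lam r := ⟨hstat, hdecr, hmul⟩
  have hreg : SmoothNondegenerateOn f c S Mf Lf Mc σ Lc := ⟨hMf, hLf, hMc, hσlb, hLc⟩
  have hsub (α : ℝ) : IsCompact {y | f y + ρ₀ / 2 * ‖c y‖ ^ 2 ≤ α} :=
    (hcompact α).elim (fun h => h ▸ isCompact_empty) id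
  have hLb (y : ℝ^n) : Lbar ≤ f y + ρ₀ / 2 * ‖c y‖ ^ 2 :=
    hLbar ▸ ciInf_le (bddBelow_range_of_isCompact_sublevel (by fun_prop) hsub) y
  have hα : 7 * AL f c ρ (x 0) (lam 0) - 6 * Lbar + 12 * (‖lam 0‖ ^ 2 / (2 * (ρ - ρ₀))) + 2
      ≤ αhat := by
    linarith only [seven_mul_AL_add_le hρ1 hρ₀ρ hU hx0 (lam 0), hαhat]
  have hx₀ : x 0 ∈ S := hS ▸ proxAL_sublevel_subset hρ₀ hβ.le
    ((AL_add_norm_sq_div_le_seven_mul hρ₀ hLb (x 0) (lam 0)).trans (by linarith only [hα]))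
    (by simp)
  have hMc₀ : 0 ≤ Mc := (norm_nonneg _).trans (hMc _ hx₀)
  have hC : max C1 C2 ≤ ρ * β / 8 := by
    rw [show ε ^ η = 2 * β by linarith only [hβdef], div_le_iff₀ (by positivity)] at hρC
    linarith only [hρC]
  have hstar := hit.AL_add_norm_sq_div_le hρ hβ.le hρ₀ρ hLb hα hS.symm.subset
    (fun k h₀ h₁ => hit.norm_lam_succ_sq_div_le_one hβ.le hreg hσ (hS ▸ hsub αhat).isBounded
      (hDS ▸ hρN) (by linarith only [hrb (k+1) (by omega), hε.2]) h₀ h₁)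
    (fun k h₁ h₂ => hit.mul_norm_c_sq_le hρ hβ.le hreg hσ (hC1 ▸ (le_max_left _ _).trans hC)
      (hC2 ▸ (le_max_right _ _).trans hC) h₁ h₂)
    (fun K => (sum_range_mul_add_mul_le (a := fun k => ‖r (k+1)‖ ^ 2) (fun _ => sq_nonneg _)
      hRsum (by positivity) (by positivity) K).trans
      (residual_weight_mul_le_one hσ hρ (by linarith only [hR]) hρR))
  exact fun k => ⟨hS ▸ proxAL_sublevel_subset hρ₀ hβ.le (hstar k),
    AL_sub_iInf_proxAL_le hρ₀ hβ.le hLb (hstar k)⟩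

theorem stmt9
    {n m : ℕ}
    (f : EuclideanSpace ℝ (Fin n) → ℝ) (c : EuclideanSpace ℝ (Fin n) → EuclideanSpace ℝ (Fin m))
    (hf : ContDiff ℝ 2 f) (hc : ContDiff ℝ 2 c)
    (ρ β : ℝ) (hρ : 0 < ρ) (hβ : 0 < β)
    (x : ℕ → EuclideanSpace ℝ (Fin n)) (lam : ℕ → EuclideanSpace ℝ (Fin m)) (r : ℕ → EuclideanSpace ℝ (Fin n))
    (hstat : ∀ k : ℕ,
      gradient f (x (k+1)) + gradc c (x (k+1)) (lam k)
        + ρ • gradc c (x (k+1)) (c (x (k+1))) + β • (x (k+1) - x k) = r (k+1))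
    (hdecr : ∀ k : ℕ,
      AL f c ρ (x (k+1)) (lam k) + β / 2 * ‖x (k+1) - x k‖ ^ 2 ≤ AL f c ρ (x k) (lam k))
    (hmul : ∀ k : ℕ, lam (k+1) = lam k + ρ • c (x (k+1)))
    (ρ₀ Lbar U C₀ αhat : ℝ) (hρ₀ : 0 ≤ ρ₀)
    (hcompact : ∀ α : ℝ,
      {y : EuclideanSpace ℝ (Fin n) | f y + ρ₀ / 2 * ‖c y‖ ^ 2 ≤ α} = ∅ ∨
        IsCompact {y : EuclideanSpace ℝ (Fin n) | f y + ρ₀ / 2 * ‖c y‖ ^ 2 ≤ α})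
    (hLbar : Lbar = ⨅ y : EuclideanSpace ℝ (Fin n), (f y + ρ₀ / 2 * ‖c y‖ ^ 2))
    (hU : ∀ y : EuclideanSpace ℝ (Fin n), ‖c y‖ ≤ 1 → f y ≤ U)
    (hC₀ : 0 < C₀)
    (hαhat : αhat = 7 * U + 7 * C₀ - 6 * Lbar + 13 * ‖lam 0‖ ^ 2 + 2)
    (S : Set (EuclideanSpace ℝ (Fin n)))
    (hS : S = {y : EuclideanSpace ℝ (Fin n) | f y + ρ₀ / 2 * ‖c y‖ ^ 2 ≤ αhat})
    (Mf Lf Mc σ Lc DS : ℝ) (hσ : 0 < σ)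
    (hMf : ∀ y ∈ S, ‖gradient f y‖ ≤ Mf)
    (hLf : ∀ y ∈ S, ∀ z ∈ S, ‖gradient f y - gradient f z‖ ≤ Lf * ‖y - z‖)
    (hMc : ∀ y ∈ S, ‖fderiv ℝ c y‖ ≤ Mc)
    (hσlb : ∀ y ∈ S, ∀ v : EuclideanSpace ℝ (Fin m), σ * ‖v‖ ≤ ‖gradc c y v‖)
    (hLc : ∀ y ∈ S, ∀ z ∈ S, ‖fderiv ℝ c y - fderiv ℝ c z‖ ≤ Lc * ‖y - z‖)
    (hDS : DS = Metric.diam S)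
    (C1 C2 : ℝ)
    (hC1 : C1 = 4 / σ ^ 2 * (Lf + Lc * Mf / σ + β) ^ 2)
    (hC2 : C2 = 4 / σ ^ 2 * (β + 2 * Mc * β / σ) ^ 2)
    (ε η : ℝ) (hε : 0 < ε ∧ ε ≤ 1) (hη : 0 ≤ η ∧ η ≤ 2)
    (R : ℝ) (hR : 1 ≤ R)
    (hRsum : ∀ K : ℕ, ∑ k ∈ Finset.range K, ‖r (k+1)‖ ^ 2 ≤ R)
    (hrb : ∀ k : ℕ, 1 ≤ k → ‖r k‖ ≤ ε / 2)
    (hβdef : β = ε ^ η / 2)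
    (hρbig : max (max (16 * max C1 C2 / ε ^ η)
        ((Mf + β * DS + 1) ^ 2 / (2 * σ ^ 2) + ρ₀))
        (max (max (16 * (Mc ^ 2 + σ ^ 2) * R / σ ^ 4) (3 * ρ₀)) 1) ≤ ρ)
    (hx0 : ‖c (x 0)‖ ^ 2 ≤ min (C₀ / ρ) 1)
    (hρextra : ‖lam 0‖ ^ 2 / 2 + ρ₀ ≤ ρ) :
    ∀ k : ℕ,
      {y : EuclideanSpace ℝ (Fin n) | AL f c ρ y (lam k) + β / 2 * ‖y - x k‖ ^ 2 ≤ AL f c ρ (x k) (lam k)} ⊆ S ∧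
      AL f c ρ (x k) (lam k)
        - (⨅ y : EuclideanSpace ℝ (Fin n), (AL f c ρ y (lam k) + β / 2 * ‖y - x k‖ ^ 2)) ≤ αhat - Lbar :=
  stmt9_general f c hf hc ρ β hρ hβ x lam r hstat hdecr hmul ρ₀ Lbar U C₀ αhat hcompact hLbar hU
    hαhat S hS Mf Lf Mc σ Lc DS hσ hMf hLf hMc hσlb hLc hDS C1 C2 hC1 hC2 ε η hε R hR hRsum hrb
    hβdef hρbig hx0
end

section
/- Let x* ∈ ℝⁿ with c(x*) = 0 and δ > 0 be such that x* is the unique global minimizer of x ↦ f(x) + (1/4)‖x − x*‖⁴ over the set {x : c(x) = 0, ‖x − x*‖ ≤ δ}. Let (ρ_k) be a positive sequence with ρ_k → ∞, and for each k let x_k be a global minimizer of x ↦ f(x) + (ρ_k/2)‖c(x)‖² + (1/4)‖x − x*‖⁴ over the closed ball {x : ‖x − x*‖ ≤ δ}. Then (ρ_k/2)‖c(x_k)‖² ≤ f(x*) − f(x_k) for every k, and x_k → x* (every accumulation point of (x_k) equals x*). -/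
/-!
Testing the penalized objective at `x*` gives `f(x_k) + (ρ_k/2)‖c(x_k)‖² + ¼‖x_k − x*‖⁴ ≤ f(x*)`,
which is the first claim. Since `f` is bounded below on the compact ball, it also forces
`ρ_k ‖c(x_k)‖²` to stay bounded, so `c(x_k) → 0`. Every cluster point `a` of `(x_k)` therefore
is feasible and satisfies `f(a) + ¼‖a − x*‖⁴ ≤ f(x*)`; by uniqueness `a = x*`, and compactness
of the ball turns "unique cluster point" into convergence.
-/

open Filter Topology

theorem MapClusterPt.eq_of_tendsto {α X : Type*} [TopologicalSpace X] [T2Space X]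
    {l : Filter α} {u : α → X} {a b : X} (ha : MapClusterPt a l u) (hb : Tendsto u l (𝓝 b)) :
    a = b :=
  eq_of_nhds_neBot (ha.clusterPt.mono hb)

theorem IsCompact.tendsto_of_unique_feasible_le {ι X Y : Type*} [TopologicalSpace X]
    [TopologicalSpace Y] [T2Space Y] {l : Filter ι} {s : Set X} (hs : IsCompact s)
    {F : X → ℝ} {c : X → Y} (hF : Continuous F) (hc : Continuous c) {x₀ : X} {y₀ : Y} {t : ℝ}
    (huniq : ∀ y ∈ s, c y = y₀ → F y ≤ t → y = x₀) {x : ι → X}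
    (hxs : ∀ᶠ k in l, x k ∈ s) (hcx : Tendsto (c ∘ x) l (𝓝 y₀))
    (hFx : ∀ᶠ k in l, F (x k) ≤ t) :
    Tendsto x l (𝓝 x₀) :=
  hs.tendsto_nhds_of_unique_mapClusterPt hxs fun a has ha ↦
    huniq a has ((ha.continuousAt_comp hc.continuousAt).eq_of_tendsto hcx)
      ((isClosed_le hF continuous_const).mem_of_mapClusterPt ha hFx)

theorem tendsto_zero_of_mul_norm_sq_le {ι E : Type*} [SeminormedAddCommGroup E] {l : Filter ι}
    {ρ : ι → ℝ} {v : ι → E} {B : ℝ} (hρ : Tendsto ρ l atTop) (hB : ∀ k, ρ k * ‖v k‖ ^ 2 ≤ B) :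
    Tendsto v l (𝓝 0) := by
  have hsq : Tendsto (fun k ↦ ‖v k‖ ^ 2) l (𝓝 0) := by
    refine squeeze_zero' (.of_forall fun k ↦ by positivity) ?_
      ((tendsto_const_nhds (x := B)).div_atTop hρ)
    filter_upwards [hρ.eventually_gt_atTop 0] with k hk
    rw [le_div_iff₀ hk, mul_comm]
    exact hB k
  rw [tendsto_zero_iff_norm_tendsto_zero]
  simpa [Real.sqrt_sq (norm_nonneg _)] using hsq.sqrt

theorem stmt11_general {n m : ℕ}
    (f : EuclideanSpace ℝ (Fin n) → ℝ) (c : EuclideanSpace ℝ (Fin n) → EuclideanSpace ℝ (Fin m))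
    (hf : Continuous f) (hc : Continuous c)
    (xstar : EuclideanSpace ℝ (Fin n)) (hfeas : c xstar = 0) (δ : ℝ) (hδ : 0 < δ)
    (huniq : ∀ y : EuclideanSpace ℝ (Fin n), c y = 0 → ‖y - xstar‖ ≤ δ →
      f y + 1 / 4 * ‖y - xstar‖ ^ 4 ≤ f xstar → y = xstar)
    (ρ : ℕ → ℝ) (hρtop : Tendsto ρ atTop atTop)
    (x : ℕ → EuclideanSpace ℝ (Fin n))
    (hxball : ∀ k, ‖x k - xstar‖ ≤ δ)
    (hxmin : ∀ k, ∀ y : EuclideanSpace ℝ (Fin n), ‖y - xstar‖ ≤ δ →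
      f (x k) + ρ k / 2 * ‖c (x k)‖ ^ 2 + 1 / 4 * ‖x k - xstar‖ ^ 4
        ≤ f y + ρ k / 2 * ‖c y‖ ^ 2 + 1 / 4 * ‖y - xstar‖ ^ 4) :
    (∀ k, ρ k / 2 * ‖c (x k)‖ ^ 2 ≤ f xstar - f (x k)) ∧
    Tendsto x atTop (𝓝 xstar) := by
  have hx_le : ∀ k, f (x k) + ρ k / 2 * ‖c (x k)‖ ^ 2 + 1 / 4 * ‖x k - xstar‖ ^ 4 ≤ f xstar :=
    fun k ↦ by simpa [hfeas] using hxmin k xstar (by simpa using hδ.le)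
  have hpenalty : ∀ k, ρ k / 2 * ‖c (x k)‖ ^ 2 ≤ f xstar - f (x k) :=
    fun k ↦ by linarith [hx_le k, pow_nonneg (norm_nonneg (x k - xstar)) 4]
  have hmem : ∀ k, x k ∈ Metric.closedBall xstar δ := fun k ↦ mem_closedBall_iff_norm.2 (hxball k)
  obtain ⟨z, -, hz⟩ := (isCompact_closedBall xstar δ).exists_isMinOn
    ⟨xstar, Metric.mem_closedBall_self hδ.le⟩ hf.continuousOn
  have hcx : Tendsto (fun k ↦ c (x k)) atTop (𝓝 0) :=
    tendsto_zero_of_mul_norm_sq_le (B := 2 * (f xstar - f z)) hρtop fun k ↦ by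
      linarith [hpenalty k, isMinOn_iff.mp hz _ (hmem k)]
  have hF_le : ∀ᶠ k in atTop, f (x k) + 1 / 4 * ‖x k - xstar‖ ^ 4 ≤ f xstar := by
    filter_upwards [hρtop.eventually_ge_atTop 0] with k hk
    linarith [hx_le k, mul_nonneg (div_nonneg hk zero_le_two) (sq_nonneg ‖c (x k)‖)]
  refine ⟨hpenalty, (isCompact_closedBall xstar δ).tendsto_of_unique_feasible_le
    (F := fun y ↦ f y + 1 / 4 * ‖y - xstar‖ ^ 4) (by fun_prop) hc
    (fun y hy hcy ↦ huniq y hcy (mem_closedBall_iff_norm.1 hy)) (.of_forall hmem) hcx hF_le⟩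

theorem stmt11 {n m : ℕ}
    (f : EuclideanSpace ℝ (Fin n) → ℝ) (c : EuclideanSpace ℝ (Fin n) → EuclideanSpace ℝ (Fin m))
    (hf : Continuous f) (hc : Continuous c)
    (xstar : EuclideanSpace ℝ (Fin n)) (hfeas : c xstar = 0) (δ : ℝ) (hδ : 0 < δ)
    (hmin : ∀ y : EuclideanSpace ℝ (Fin n), c y = 0 → ‖y - xstar‖ ≤ δ →
      f xstar ≤ f y + 1 / 4 * ‖y - xstar‖ ^ 4)
    (huniq : ∀ y : EuclideanSpace ℝ (Fin n), c y = 0 → ‖y - xstar‖ ≤ δ →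
      f y + 1 / 4 * ‖y - xstar‖ ^ 4 ≤ f xstar → y = xstar)
    (ρ : ℕ → ℝ) (hρpos : ∀ k, 0 < ρ k) (hρtop : Tendsto ρ atTop atTop)
    (x : ℕ → EuclideanSpace ℝ (Fin n))
    (hxball : ∀ k, ‖x k - xstar‖ ≤ δ)
    (hxmin : ∀ k, ∀ y : EuclideanSpace ℝ (Fin n), ‖y - xstar‖ ≤ δ →
      f (x k) + ρ k / 2 * ‖c (x k)‖ ^ 2 + 1 / 4 * ‖x k - xstar‖ ^ 4
        ≤ f y + ρ k / 2 * ‖c y‖ ^ 2 + 1 / 4 * ‖y - xstar‖ ^ 4) :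
    (∀ k, ρ k / 2 * ‖c (x k)‖ ^ 2 ≤ f xstar - f (x k)) ∧
    Tendsto x atTop (𝓝 xstar) :=
  stmt11_general f c hf hc xstar hfeas δ hδ huniq ρ hρtop x hxball hxmin
end

section
/- Let x*, x ∈ ℝⁿ, ρ > 0, B ≥ 0, and suppose: (a) ∇f(x) + ρ∇c(x)c(x) + ‖x − x*‖²(x − x*) = 0; (b) for every d ∈ ℝⁿ, dᵀ∇²f(x)d + ρΣ_{i=1}^m c_i(x)·dᵀ∇²c_i(x)d + ρ‖∇c(x)ᵀd‖² + 2(dᵀ(x − x*))² + ‖x − x*‖²‖d‖² ≥ 0; and (c) (ρ/2)‖c(x)‖² ≤ B. Define λ = ρ c(x) and ε = max{‖x − x*‖³, 3‖x − x*‖², √(2B/ρ)}. Then ‖∇f(x) + ∇c(x)λ‖ ≤ ε, ‖c(x)‖ ≤ ε, and dᵀ(∇²f(x) + Σ_{i=1}^m λ_i∇²c_i(x))d ≥ −ε‖d‖² for every d ∈ ℝⁿ with ∇c(x)ᵀd = 0; that is, x is an ε-approximate second-order KKT point of min f subject to c = 0. -/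
open Filter Topology

/-! Condition (a) says that the KKT residual `∇f(x) + ∇c(x)(ρ c(x))` equals
`-‖x - x*‖² (x - x*)`, of norm `‖x - x*‖³`, and (c) gives `‖c(x)‖ ≤ √(2B/ρ)`. On the null space
of the Jacobian the term `ρ‖∇c(x)ᵀd‖²` of (b) vanishes, and by Cauchy–Schwarz the two
regularisation terms are at most `3‖x - x*‖²‖d‖²`. -/

theorem norm_sq_norm_smul_self {E : Type*} [SeminormedAddCommGroup E] [NormedSpace ℝ E]
    (v : E) : ‖‖v‖ ^ 2 • v‖ = ‖v‖ ^ 3 := by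
  rw [norm_smul, Real.norm_of_nonneg (by positivity)]
  ring

theorem le_sqrt_of_half_mul_sq_le {a ρ B : ℝ} (hρ : 0 < ρ)
    (h : ρ / 2 * a ^ 2 ≤ B) : a ≤ Real.sqrt (2 * B / ρ) :=
  Real.le_sqrt_of_sq_le <| by
    rw [le_div_iff₀ hρ]
    linarith

theorem real_inner_sq_le_norm_sq_mul_norm_sq {E : Type*} [NormedAddCommGroup E]
    [InnerProductSpace ℝ E] (d v : E) : (inner ℝ d v : ℝ) ^ 2 ≤ ‖v‖ ^ 2 * ‖d‖ ^ 2 := by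
  rw [← sq_abs, ← mul_pow, mul_comm]
  exact pow_le_pow_left₀ (abs_nonneg _) (abs_real_inner_le_norm d v) 2

theorem neg_three_mul_le_of_nonneg_add_inner_sq {E : Type*} [NormedAddCommGroup E]
    [InnerProductSpace ℝ E] {q : ℝ} {d v : E}
    (h : 0 ≤ q + 2 * (inner ℝ d v : ℝ) ^ 2 + ‖v‖ ^ 2 * ‖d‖ ^ 2) :
    -(3 * ‖v‖ ^ 2) * ‖d‖ ^ 2 ≤ q := by
  linarith [real_inner_sq_le_norm_sq_mul_norm_sq d v]

theorem stmt12_general {n m : ℕ}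
    (f : EuclideanSpace ℝ (Fin n) → ℝ) (c : EuclideanSpace ℝ (Fin n) → EuclideanSpace ℝ (Fin m))
    (xstar x : EuclideanSpace ℝ (Fin n)) (ρ B : ℝ) (hρ : 0 < ρ)
    (ha : gradient f x + ρ • gradc c x (c x) + ‖x - xstar‖ ^ 2 • (x - xstar) = 0)
    (hb : ∀ d : EuclideanSpace ℝ (Fin n),
      0 ≤ hess f x d + ρ * ∑ i, c x i * hess (fun y => c y i) x d
        + ρ * ‖fderiv ℝ c x d‖ ^ 2 + 2 * (inner ℝ d (x - xstar) : ℝ) ^ 2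
        + ‖x - xstar‖ ^ 2 * ‖d‖ ^ 2)
    (hcbd : ρ / 2 * ‖c x‖ ^ 2 ≤ B) :
    ‖gradient f x + gradc c x (ρ • c x)‖
        ≤ max (max (‖x - xstar‖ ^ 3) (3 * ‖x - xstar‖ ^ 2)) (Real.sqrt (2 * B / ρ)) ∧
    ‖c x‖ ≤ max (max (‖x - xstar‖ ^ 3) (3 * ‖x - xstar‖ ^ 2)) (Real.sqrt (2 * B / ρ)) ∧
    ∀ d : EuclideanSpace ℝ (Fin n), fderiv ℝ c x d = 0 →
      -(max (max (‖x - xstar‖ ^ 3) (3 * ‖x - xstar‖ ^ 2)) (Real.sqrt (2 * B / ρ))) * ‖d‖ ^ 2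
        ≤ hess f x d + ∑ i, (ρ * c x i) * hess (fun y => c y i) x d := by
  set ε := max (max (‖x - xstar‖ ^ 3) (3 * ‖x - xstar‖ ^ 2)) (Real.sqrt (2 * B / ρ))
  have hε_cube : ‖x - xstar‖ ^ 3 ≤ ε := (le_max_left _ _).trans (le_max_left _ _)
  have hε_sq : 3 * ‖x - xstar‖ ^ 2 ≤ ε := (le_max_right _ _).trans (le_max_left _ _)
  have hε_sqrt : Real.sqrt (2 * B / ρ) ≤ ε := le_max_right _ _
  have residual : gradient f x + gradc c x (ρ • c x) = -(‖x - xstar‖ ^ 2 • (x - xstar)) := by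
    rw [map_smul]
    linear_combination (norm := module) ha
  refine ⟨?_, (le_sqrt_of_half_mul_sq_le hρ hcbd).trans hε_sqrt, ?_⟩
  · rw [residual, norm_neg, norm_sq_norm_smul_self]
    exact hε_cube
  · intro d hd
    have curvature := hb d
    rw [hd, norm_zero] at curvature
    have hsum : ∑ i, (ρ * c x i) * hess (fun y => c y i) x d
        = ρ * ∑ i, c x i * hess (fun y => c y i) x d := by
      rw [Finset.mul_sum]
      exact Finset.sum_congr rfl fun i _ => mul_assoc _ _ _
    rw [hsum]
    refine le_trans ?_ (neg_three_mul_le_of_nonneg_add_inner_sq (by linarith))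
    exact mul_le_mul_of_nonneg_right (neg_le_neg hε_sq) (sq_nonneg _)

theorem stmt12 {n m : ℕ}
    (f : EuclideanSpace ℝ (Fin n) → ℝ) (c : EuclideanSpace ℝ (Fin n) → EuclideanSpace ℝ (Fin m))
    (hf : ContDiff ℝ 2 f) (hc : ContDiff ℝ 2 c)
    (xstar x : EuclideanSpace ℝ (Fin n)) (ρ B : ℝ) (hρ : 0 < ρ) (hB : 0 ≤ B)
    (ha : gradient f x + ρ • gradc c x (c x) + ‖x - xstar‖ ^ 2 • (x - xstar) = 0)
    (hb : ∀ d : EuclideanSpace ℝ (Fin n),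
      0 ≤ hess f x d + ρ * ∑ i, c x i * hess (fun y => c y i) x d
        + ρ * ‖fderiv ℝ c x d‖ ^ 2 + 2 * (inner ℝ d (x - xstar) : ℝ) ^ 2
        + ‖x - xstar‖ ^ 2 * ‖d‖ ^ 2)
    (hcbd : ρ / 2 * ‖c x‖ ^ 2 ≤ B) :
    ‖gradient f x + gradc c x (ρ • c x)‖
        ≤ max (max (‖x - xstar‖ ^ 3) (3 * ‖x - xstar‖ ^ 2)) (Real.sqrt (2 * B / ρ)) ∧
    ‖c x‖ ≤ max (max (‖x - xstar‖ ^ 3) (3 * ‖x - xstar‖ ^ 2)) (Real.sqrt (2 * B / ρ)) ∧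
    ∀ d : EuclideanSpace ℝ (Fin n), fderiv ℝ c x d = 0 →
      -(max (max (‖x - xstar‖ ^ 3) (3 * ‖x - xstar‖ ^ 2)) (Real.sqrt (2 * B / ρ))) * ‖d‖ ^ 2
        ≤ hess f x d + ∑ i, (ρ * c x i) * hess (fun y => c y i) x d :=
  stmt12_general f c xstar x ρ B hρ ha hb hcbd
end
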